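/- arXiv:1606.00974 — 10 statements merged into one kernel-verified Lean document; each statement's English description precedes it below -/
import Mathlib

section
/- Let F be a field whose characteristic is not 2, and let G be a simple graph on a finite nonempty vertex set V with |V| = n. Then the incidence matrix of G has rank n over F if and only if every connected component of G contains an odd cycle (equivalently, no connected component of G is bipartite/2-colorable; in particular G has no isolated vertices). -/
/-!
A vector `y` is orthogonal to every column of the incidence matrix iff `y u + y v = 0` along
every edge. Along a walk such a `y` can only change sign, so on a connected component it is
either zero or takes only the values `± a` with `a ≠ 0`, and `a ≠ -a` because `char F ≠ 2`: this
is a proper 2-colouring of that component. Conversely a 2-colouring of one component gives the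
nonzero vector `±1` on that component and `0` elsewhere. Hence the rows are independent exactly
when no component is 2-colourable.
-/

open Matrix

theorem Matrix.rank_eq_card_rows_iff {m n R : Type*} [Field R] [Fintype m] [Fintype n]
    (A : Matrix m n R) : A.rank = Fintype.card m ↔ ∀ y : m → R, y ᵥ* A = 0 → y = 0 := by
  rw [rank_eq_finrank_span_row, ← Set.finrank, eq_comm,
    ← linearIndependent_iff_card_eq_finrank_span, Fintype.linearIndependent_iff]
  simp [vecMul_eq_sum, funext_iff]

namespace SimpleGraph

variable {V R : Type*} {G : SimpleGraph V}

section IncMatrix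

variable [Fintype V] [DecidableEq V] [DecidableRel G.Adj] [NonAssocSemiring R]

theorem vecMul_incMatrix_apply_mk (y : V → R) {u v : V} (h : G.Adj u v) :
    (y ᵥ* G.incMatrix R) s(u, v) = y u + y v := by
  have hmem (w : V) : s(u, v) ∈ G.incidenceSet w ↔ w ∈ ({u, v} : Finset V) := by
    simp [mk'_mem_incidenceSet_iff, h]
  simp only [vecMul, dotProduct, incMatrix_apply', hmem, mul_ite, mul_one, mul_zero,
    Finset.sum_ite_mem, Finset.univ_inter, Finset.sum_pair h.ne]

theorem vecMul_incMatrix_apply_of_notMem_edgeSet (y : V → R) {e : Sym2 V}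
    (he : e ∉ G.edgeSet) : (y ᵥ* G.incMatrix R) e = 0 :=
  Finset.sum_eq_zero fun a _ =>
    mul_eq_zero_of_right _
      (G.incMatrix_of_notMem_incidenceSet fun h => he (G.incidenceSet_subset a h))

theorem vecMul_incMatrix_eq_zero_iff (y : V → R) :
    y ᵥ* G.incMatrix R = 0 ↔ ∀ u v, G.Adj u v → y u + y v = 0 := by
  refine ⟨fun h u v huv => by rw [← vecMul_incMatrix_apply_mk y huv, h, Pi.zero_apply],
    fun h => funext fun e => ?_⟩
  induction e using Sym2.ind with
  | h u v =>
    by_cases huv : G.Adj u v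
    · rw [vecMul_incMatrix_apply_mk y huv, h u v huv, Pi.zero_apply]
    · exact vecMul_incMatrix_apply_of_notMem_edgeSet y huv

end IncMatrix

section Ring

variable [Ring R] {y : V → R}

theorem Reachable.eq_or_eq_neg_of_forall_adj (hy : ∀ u v, G.Adj u v → y u + y v = 0) {u w : V}
    (h : G.Reachable u w) : y w = y u ∨ y w = -y u := by
  obtain ⟨p⟩ := h
  induction p with
  | nil => exact Or.inl rfl
  | @cons a b c hab p ih =>
    have hba : y b = -y a := eq_neg_of_add_eq_zero_right (hy a b hab)
    rcases ih with h | h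
    · exact Or.inr (h.trans hba)
    · exact Or.inl (by rw [h, hba, neg_neg])

theorem exists_ne_zero_forall_adj_of_colorable_induce_supp [Nontrivial R]
    {c : G.ConnectedComponent} (hc : (G.induce c.supp).Colorable 2) :
    ∃ y : V → R, y ≠ 0 ∧ ∀ u v, G.Adj u v → y u + y v = 0 := by
  classical
  obtain ⟨C⟩ := hc
  refine ⟨fun v => if h : v ∈ c.supp then (-1) ^ (C ⟨v, h⟩ : ℕ) else 0, ?_, ?_⟩
  · obtain ⟨v, hv⟩ := c.nonempty_supp
    exact Function.ne_iff.mpr ⟨v, by simpa [hv] using (isUnit_neg_one.pow _).ne_zero⟩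
  · intro u v huv
    by_cases hu : u ∈ c.supp
    · have hv : v ∈ c.supp := (c.mem_supp_congr_adj huv).mp hu
      have hne : C ⟨u, hu⟩ ≠ C ⟨v, hv⟩ := C.valid (by simpa using huv)
      simp only [hu, hv, dite_true]
      generalize C ⟨u, hu⟩ = a, C ⟨v, hv⟩ = b at hne
      fin_cases a <;> fin_cases b <;> simp_all
    · have hv : v ∉ c.supp := fun hv => hu ((c.mem_supp_congr_adj huv).mpr hv)
      simp [hu, hv]

theorem colorable_induce_supp_of_forall_adj [NoZeroDivisors R] (hR : ringChar R ≠ 2)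
    (hy : ∀ u v, G.Adj u v → y u + y v = 0) {v₀ : V} (hv₀ : y v₀ ≠ 0) :
    (G.induce (G.connectedComponentMk v₀).supp).Colorable 2 := by
  classical
  have : Nontrivial R := ⟨⟨_, _, hv₀⟩⟩
  have hsign : ∀ u ∈ (G.connectedComponentMk v₀).supp, y u = y v₀ ∨ y u = -y v₀ :=
    fun u hu => (ConnectedComponent.exact hu).symm.eq_or_eq_neg_of_forall_adj hy
  have hne : y v₀ ≠ -y v₀ := fun h =>
    hv₀ ((Ring.eq_self_iff_eq_zero_of_char_ne_two hR).mp h.symm)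
  refine ⟨Coloring.mk (fun u => if y u = y v₀ then 0 else 1) fun {a b} hab hcol => ?_⟩
  have hadj : G.Adj a b := by simpa using hab
  have hsame : y a = y b := by
    rcases hsign a a.2 with ha | ha <;> rcases hsign b b.2 with hb | hb
    · exact ha.trans hb.symm
    · simp [ha, hb, hne.symm] at hcol
    · simp [ha, hb, hne.symm] at hcol
    · exact ha.trans hb.symm
  have ha0 : y a = 0 :=
    (Ring.eq_self_iff_eq_zero_of_char_ne_two hR).mp
      (neg_eq_of_add_eq_zero_left (hsame ▸ hy a b hadj))
  rcases hsign a a.2 with ha | ha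
  · exact hv₀ (ha.symm.trans ha0)
  · exact hv₀ (neg_eq_zero.mp (ha.symm.trans ha0))

end Ring

end SimpleGraph

open Classical in
theorem incMatrix_rank_eq_card_iff_general {V F : Type*} [Fintype V] [DecidableEq V]
    [Field F] (hF : ringChar F ≠ 2) (G : SimpleGraph V) (n : ℕ) (hn : Fintype.card V = n) :
    (G.incMatrix F).rank = n ↔
      ∀ c : G.ConnectedComponent, ¬ (G.induce c.supp).Colorable 2 := by
  subst hn
  simp only [Matrix.rank_eq_card_rows_iff, SimpleGraph.vecMul_incMatrix_eq_zero_iff]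
  constructor
  · intro h c hc
    obtain ⟨y, hy0, hy⟩ :=
      SimpleGraph.exists_ne_zero_forall_adj_of_colorable_induce_supp (R := F) hc
    exact hy0 (h y hy)
  · intro h y hy
    by_contra hy0
    obtain ⟨v₀, hv₀⟩ := Function.ne_iff.mp hy0
    exact h _ (SimpleGraph.colorable_induce_supp_of_forall_adj hF hy hv₀)

open Classical in
/-- Over a field of characteristic different from 2, the incidence matrix
of a simple graph on a nonempty vertex set of size `n` has rank `n` if and only if every
connected component fails to be 2-colorable (i.e. contains an odd cycle). -/
theorem incMatrix_rank_eq_card_iff {V F : Type*} [Fintype V] [DecidableEq V] [Nonempty V]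
    [Field F] (hF : ringChar F ≠ 2) (G : SimpleGraph V) (n : ℕ) (hn : Fintype.card V = n) :
    (G.incMatrix F).rank = n ↔
      ∀ c : G.ConnectedComponent, ¬ (G.induce c.supp).Colorable 2 :=
  incMatrix_rank_eq_card_iff_general hF G n hn
end

section
/- Let F be a field of characteristic 2, V a finite type, G a simple graph on V, and L a subset of V. For each edge {u,v} of G let χ_{u,v} ∈ (V → F) be the vector taking value 1 at u and at v and 0 elsewhere, and for each w ∈ L let e_w ∈ (V → F) be the standard basis vector supported at w. Then the F-linear span of { χ_{u,v} : {u,v} an edge of G } ∪ { e_w : w ∈ L } is all of V → F if and only if every connected component of G contains a vertex of L, i.e., for every v ∈ V there exists w ∈ L reachable from v in G. -/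
/-!
Write `e_w` for `Pi.single w 1`. Since `χ_{u,v} = e_u + e_v`, the identity `e_u = χ_{u,v} - e_v`
propagates membership of `e_w` in the span along edges, so if every vertex reaches `L` the span
contains every `e_v`. Conversely, in characteristic 2 the functional summing the coordinates over
a connected component `C` kills every `χ_{u,v}` (an edge has both or no ends in `C`), and it kills
`e_w` for `w ∉ C`; if `C` misses `L` it thus vanishes on the span but not on `e_v` for `v ∈ C`.
-/

namespace SimpleGraph

variable {V R : Type*} {G : SimpleGraph V}

theorem mem_of_reachable_of_add_mem {M : Type*} [Ring R] [AddCommGroup M] [Module R M]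
    {p : Submodule R M} {e : V → M} (hadj : ∀ u v, G.Adj u v → e u + e v ∈ p) {v w : V}
    (hvw : G.Reachable v w) (hw : e w ∈ p) : e v ∈ p := by
  rw [reachable_iff_reflTransGen] at hvw
  induction hvw using Relation.ReflTransGen.head_induction_on with
  | refl => exact hw
  | head hac _ hc => simpa using p.sub_mem (hadj _ _ hac) hc

end SimpleGraph

section

variable {V R : Type*} [DecidableEq V]

theorem ite_eq_or_eq_eq_single_add_single [AddMonoidWithOne R] {u v : V} (huv : u ≠ v) :
    (fun w => if w = u ∨ w = v then (1 : R) else 0) = Pi.single u 1 + Pi.single v 1 := by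
  ext w
  by_cases hwu : w = u
  · subst hwu; simp [huv]
  · by_cases hwv : w = v
    · subst hwv; simp [hwu]
    · simp [hwu, hwv]

theorem sum_proj_single [Semiring R] (s : Finset V) (w : V) :
    (∑ x ∈ s, LinearMap.proj x : (V → R) →ₗ[R] R) (Pi.single w 1) = if w ∈ s then 1 else 0 := by
  simp [Finset.sum_pi_single']

theorem sum_proj_single_add_single_eq_zero [Semiring R] [CharP R 2] {s : Finset V} {u v : V}
    (h : u ∈ s ↔ v ∈ s) :
    (∑ x ∈ s, LinearMap.proj x : (V → R) →ₗ[R] R) (Pi.single u 1 + Pi.single v 1) = 0 := by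
  rw [map_add, sum_proj_single, sum_proj_single]
  by_cases hu : u ∈ s <;> simp [hu, ← h, CharTwo.add_self_eq_zero]

namespace SimpleGraph

variable (R) in
def codingVectors [Zero R] [One R] (G : SimpleGraph V) (L : Set V) : Set (V → R) :=
  {x | ∃ u v, G.Adj u v ∧ x = fun w => if w = u ∨ w = v then 1 else 0} ∪
    {x | ∃ w ∈ L, x = Pi.single w 1}

variable {G : SimpleGraph V} {L : Set V}

theorem single_mem_span_codingVectors [Ring R] {v w : V} (hw : w ∈ L) (hvw : G.Reachable v w) :
    Pi.single v 1 ∈ Submodule.span R (G.codingVectors R L) := by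
  refine mem_of_reachable_of_add_mem (e := fun v => Pi.single v 1) (fun u v huv => ?_) hvw
    (Submodule.subset_span (Or.inr ⟨w, hw, rfl⟩))
  exact Submodule.subset_span (Or.inl ⟨u, v, huv, (ite_eq_or_eq_eq_single_add_single huv.ne).symm⟩)

theorem span_codingVectors_le_ker_sum_proj [Semiring R] [CharP R 2] {s : Finset V}
    (hs : ∀ u v, G.Adj u v → u ∈ s → v ∈ s) (hL : ∀ w ∈ L, w ∉ s) :
    Submodule.span R (G.codingVectors R L) ≤ LinearMap.ker (∑ x ∈ s, LinearMap.proj x) := by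
  refine Submodule.span_le.2 ?_
  rintro _ (⟨u, v, huv, rfl⟩ | ⟨w, hw, rfl⟩)
  · rw [SetLike.mem_coe, LinearMap.mem_ker, ite_eq_or_eq_eq_single_add_single huv.ne]
    exact sum_proj_single_add_single_eq_zero ⟨hs u v huv, hs v u huv.symm⟩
  · simp [sum_proj_single, hL w hw]

end SimpleGraph

end

/-- decodability over a field of characteristic 2. The vectors
`χ_{u,v}` for edges `{u,v}` of `G` together with the standard basis vectors `e_w` for
`w ∈ L` span all of `V → F` if and only if every vertex of `V` can reach a vertex of `L`
in `G`, i.e. every connected component of `G` contains a vertex of `L`. -/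
theorem span_eq_top_iff_char_two {V F : Type*} [Fintype V] [DecidableEq V] [Field F]
    [CharP F 2] (G : SimpleGraph V) (L : Set V) :
    Submodule.span F
        ({x : V → F | ∃ u v, G.Adj u v ∧ x = fun w => if w = u ∨ w = v then 1 else 0} ∪
          {x : V → F | ∃ w ∈ L, x = Pi.single w 1}) = ⊤ ↔
      ∀ v : V, ∃ w ∈ L, G.Reachable v w := by
  change Submodule.span F (G.codingVectors F L) = ⊤ ↔ _
  constructor
  · intro htop v
    by_contra! hL
    classical
    have hker := G.span_codingVectors_le_ker_sum_proj (s := Finset.univ.filter (G.Reachable v))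
      (by simpa using fun u w huw hu => hu.trans huw.reachable) (by simpa using hL)
      (htop ▸ Submodule.mem_top : (Pi.single v 1 : V → F) ∈ _)
    simp [sum_proj_single] at hker
  · intro hreach
    rw [eq_top_iff, ← (Pi.basisFun F V).span_eq, Submodule.span_le]
    rintro _ ⟨v, rfl⟩
    obtain ⟨w, hwL, hvw⟩ := hreach v
    simpa using G.single_mem_span_codingVectors hwL hvw
end

section
/- Let F be a field whose characteristic is not 2, V a finite type, G a simple graph on V, and L a subset of V. For each edge {u,v} of G let χ_{u,v} ∈ (V → F) be the vector taking value 1 at u and at v and 0 elsewhere, and for each w ∈ L let e_w ∈ (V → F) be the standard basis vector supported at w. Then the F-linear span of { χ_{u,v} : {u,v} an edge of G } ∪ { e_w : w ∈ L } is all of V → F if and only if every connected component of G either contains a vertex of L or contains an odd cycle (i.e., is not bipartite/2-colorable). -/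
/-!
Each edge vector `e_u + e_v` links the two endpoints, so along a walk of length `ℓ` from `u` to
`v` the span contains `e_u - (-1)^ℓ e_v`. Hence a known vertex (a loop) makes every vertex of its
component known, and an odd closed walk at `u` gives `2 e_u`, which suffices when `2 ≠ 0`.
Conversely, a 2-coloring of a component without loops yields the signed indicator vector
`±1` on the component, which is orthogonal to every generator, so the span is proper.
-/

open SimpleGraph Matrix

section

variable {V : Type*}

lemma ite_or_eq_single_add_single [DecidableEq V] {M : Type*} [AddZeroClass M] (a : M)
    {u v : V} (huv : u ≠ v) :
    (fun w => if w = u ∨ w = v then a else 0) = Pi.single u a + Pi.single v a := by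
  funext w
  by_cases hu : w = u <;> by_cases hv : w = v <;> simp_all

lemma Submodule.eq_top_of_forall_single_one_mem [Finite V] [DecidableEq V] {R : Type*}
    [Semiring R] {W : Submodule R (V → R)} (hW : ∀ i, Pi.single i 1 ∈ W) : W = ⊤ := by
  rw [eq_top_iff, ← (Pi.basisFun R V).span_eq, Submodule.span_le]
  rintro _ ⟨i, rfl⟩
  simpa using hW i

lemma eq_zero_of_span_eq_top_of_dotProduct_eq_zero [Fintype V] [DecidableEq V] {R : Type*}
    [CommSemiring R] {S : Set (V → R)} (hS : Submodule.span R S = ⊤) {g : V → R}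
    (hg : ∀ x ∈ S, x ⬝ᵥ g = 0) : g = 0 := by
  have hker : Submodule.span R S ≤ LinearMap.ker ((dotProductBilin R R).flip g) :=
    Submodule.span_le.2 hg
  rw [hS, top_le_iff, LinearMap.ker_eq_top] at hker
  funext v
  simpa using LinearMap.congr_fun hker (Pi.single v 1)

section EdgeVectors

variable [DecidableEq V] {R : Type*} [CommRing R] {G : SimpleGraph V} {W : Submodule R (V → R)}

lemma SimpleGraph.Walk.single_sub_neg_one_pow_smul_single_mem
    (hW : ∀ u v, G.Adj u v → Pi.single u 1 + Pi.single v 1 ∈ W) {u v : V} (p : G.Walk u v) :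
    Pi.single u 1 - (-1 : R) ^ p.length • Pi.single v 1 ∈ W := by
  induction p with
  | nil => simp
  | @cons u w v huw q ih =>
    convert sub_mem (hW u w huw) ih using 1
    simp only [Walk.length_cons, pow_succ]
    module

lemma SimpleGraph.Reachable.single_mem
    (hW : ∀ u v, G.Adj u v → Pi.single u 1 + Pi.single v 1 ∈ W) {u v : V} (huv : G.Reachable u v)
    (hv : Pi.single v 1 ∈ W) : Pi.single u 1 ∈ W := by
  obtain ⟨p⟩ := huv
  simpa using add_mem (p.single_sub_neg_one_pow_smul_single_mem hW) (W.smul_mem ((-1) ^ p.length) hv)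

end EdgeVectors

lemma SimpleGraph.Walk.single_mem_of_odd_length [DecidableEq V] {F : Type*} [Field F]
    (h2 : (2 : F) ≠ 0) {G : SimpleGraph V} {W : Submodule F (V → F)}
    (hW : ∀ u v, G.Adj u v → Pi.single u 1 + Pi.single v 1 ∈ W) {u : V} (p : G.Walk u u)
    (hp : Odd p.length) : Pi.single u 1 ∈ W := by
  have h := p.single_sub_neg_one_pow_smul_single_mem hW
  rw [hp.neg_one_pow, neg_one_smul, sub_neg_eq_add, ← two_smul F] at h
  exact (W.smul_mem_iff h2).1 h

lemma SimpleGraph.exists_odd_loop_of_not_colorable_induce {G : SimpleGraph V} {s : Set V}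
    (hs : ¬(G.induce s).Colorable 2) : ∃ u ∈ s, ∃ p : G.Walk u u, Odd p.length := by
  simp only [two_colorable_iff_forall_loop_even, not_forall, Nat.not_even_iff_odd] at hs
  obtain ⟨u, p, hp⟩ := hs
  exact ⟨u, u.2, p.map (Embedding.induce s).toHom, (Walk.length_map _ p).symm ▸ hp⟩

lemma SimpleGraph.ConnectedComponent.exists_support_eq_supp_of_colorable {R : Type*} [Ring R]
    [Nontrivial R] {G : SimpleGraph V} (c : G.ConnectedComponent)
    (hc : (G.induce c.supp).Colorable 2) :
    ∃ g : V → R, Function.support g = c.supp ∧ ∀ u v, G.Adj u v → g u + g v = 0 := by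
  classical
  obtain ⟨C⟩ := hc
  refine ⟨fun v => if h : v ∈ c.supp then (-1) ^ (C ⟨v, h⟩ : ℕ) else 0, ?_, ?_⟩
  · ext v
    by_cases hv : v ∈ c.supp <;> simp only [Function.mem_support, hv, dif_pos, dif_neg,
      not_false_eq_true, (isUnit_neg_one.pow _).ne_zero, ne_eq, not_true_eq_false]
  · intro u v huv
    by_cases hu : u ∈ c.supp
    · have hv := c.mem_supp_of_adj_mem_supp hu huv
      have hne : C ⟨u, hu⟩ ≠ C ⟨v, hv⟩ := C.valid (show G.Adj u v from huv)
      simp only [dif_pos hu, dif_pos hv]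
      generalize C ⟨u, hu⟩ = a, C ⟨v, hv⟩ = b at hne
      fin_cases a <;> fin_cases b <;> simp_all
    · have hv : v ∉ c.supp := fun hv => hu (c.mem_supp_of_adj_mem_supp hv huv.symm)
      simp [hu, hv]

end

/-- decodability over a field of characteristic different from 2. The
vectors `χ_{u,v}` for edges `{u,v}` of `G` together with the standard basis vectors `e_w`
for `w ∈ L` span all of `V → F` if and only if every connected component of `G` either
contains a vertex of `L` or contains an odd cycle (i.e. is not 2-colorable). -/
theorem span_eq_top_iff_char_ne_two {V F : Type*} [Fintype V] [DecidableEq V] [Field F]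
    (hF : ringChar F ≠ 2) (G : SimpleGraph V) (L : Set V) :
    Submodule.span F
        ({x : V → F | ∃ u v, G.Adj u v ∧ x = fun w => if w = u ∨ w = v then 1 else 0} ∪
          {x : V → F | ∃ w ∈ L, x = Pi.single w 1}) = ⊤ ↔
      ∀ c : G.ConnectedComponent,
        (∃ w ∈ L, w ∈ c.supp) ∨ ¬ (G.induce c.supp).Colorable 2 := by
  have hedge : ∀ u v, G.Adj u v → Pi.single u 1 + Pi.single v 1 ∈ Submodule.span F
      ({x : V → F | ∃ u v, G.Adj u v ∧ x = fun w => if w = u ∨ w = v then 1 else 0} ∪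
        {x : V → F | ∃ w ∈ L, x = Pi.single w 1}) := fun u v huv =>
    ite_or_eq_single_add_single (1 : F) huv.ne ▸ Submodule.subset_span (Or.inl ⟨u, v, huv, rfl⟩)
  constructor
  · intro hspan c
    by_contra! ⟨hL, hcol⟩
    obtain ⟨g, hsupp, hadj⟩ := c.exists_support_eq_supp_of_colorable (R := F) hcol
    have hg : g = 0 := by
      refine eq_zero_of_span_eq_top_of_dotProduct_eq_zero hspan ?_
      rintro x (⟨u, v, huv, rfl⟩ | ⟨w, hw, rfl⟩)
      · rw [ite_or_eq_single_add_single _ huv.ne, add_dotProduct, single_one_dotProduct,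
          single_one_dotProduct, hadj u v huv]
      · rw [single_one_dotProduct, ← Function.notMem_support, hsupp]
        exact hL w hw
    obtain ⟨r, hr⟩ := c.nonempty_supp
    rw [← hsupp, hg] at hr
    exact hr rfl
  · intro h
    refine Submodule.eq_top_of_forall_single_one_mem fun i => ?_
    rcases h (G.connectedComponentMk i) with ⟨w, hwL, hw⟩ | hcol
    · exact (ConnectedComponent.reachable_of_mem_supp _ rfl hw).single_mem hedge
        (Submodule.subset_span (Or.inr ⟨w, hwL, rfl⟩))
    · obtain ⟨u, hu, p, hp⟩ := exists_odd_loop_of_not_colorable_induce hcol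
      exact (ConnectedComponent.reachable_of_mem_supp _ rfl hu).single_mem hedge
        (p.single_mem_of_odd_length (Ring.two_ne_zero hF) hedge hp)
end

section
/- Let G be a connected simple graph on a finite vertex set with n ≥ 1 vertices, and let A be its adjacency matrix over the natural numbers. Then G contains an odd cycle (equivalently, G is not bipartite/2-colorable) if and only if there exists an odd integer ℓ with 1 ≤ ℓ ≤ n such that the trace of A^ℓ is strictly positive. -/
/-!
A graph is 2-colorable iff all its closed walks have even length, so the point is to bound the
length of a shortest odd closed walk by the number of vertices. A closed walk longer than that
revisits a vertex, hence splits into two shorter closed walks whose lengths add up to its own;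
one of them is odd. Closed walks of length `ℓ` are counted by the diagonal of `A ^ ℓ`.
-/

namespace SimpleGraph

variable {V : Type*} {G : SimpleGraph V}

namespace Walk

theorem exists_loop_of_not_nodup_support [DecidableEq V] {u v : V} (p : G.Walk u v)
    (hp : ¬ p.support.Nodup) :
    ∃ (x : V) (p₁ : G.Walk u x) (q : G.Walk x x) (p₂ : G.Walk x v),
      q.length ≠ 0 ∧ p₁.length + q.length + p₂.length = p.length := by
  induction p with
  | nil => simp at hp
  | @cons u w v hadj p ih =>
    rw [support_cons, List.nodup_cons, not_and_or, not_not] at hp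
    by_cases hu : u ∈ p.support
    · refine ⟨u, nil, cons hadj (p.takeUntil u hu), p.dropUntil u hu, by simp, ?_⟩
      have hlen := congrArg length (p.take_spec hu)
      simp only [length_append] at hlen
      simp only [length_nil, length_cons]
      omega
    · obtain ⟨x, p₁, q, p₂, hq, hlen⟩ := ih (hp.resolve_left hu)
      exact ⟨x, cons hadj p₁, q, p₂, hq, by simp only [length_cons]; omega⟩

theorem exists_loops_of_card_lt_length [Fintype V] [DecidableEq V] {u : V} (c : G.Walk u u)
    (hc : Fintype.card V < c.length) :
    ∃ (x y : V) (c₁ : G.Walk x x) (c₂ : G.Walk y y),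
      c₁.length ≠ 0 ∧ c₂.length ≠ 0 ∧ c₁.length + c₂.length = c.length := by
  cases c with
  | nil => simp at hc
  | cons hadj p =>
    have hrep : ¬ p.support.Nodup := fun hnd => hc.not_ge <| by
      simpa [length_support] using hnd.length_le_card
    obtain ⟨x, p₁, q, p₂, hq, hsplit⟩ := p.exists_loop_of_not_nodup_support hrep
    refine ⟨u, x, cons hadj (p₁.append p₂), q, by simp, hq, ?_⟩
    simp only [length_cons, length_append]
    omega

theorem exists_odd_loop_length_le_card [Fintype V] [DecidableEq V] {u : V} (c : G.Walk u u)
    (hc : Odd c.length) :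
    ∃ (v : V) (c' : G.Walk v v), Odd c'.length ∧ c'.length ≤ Fintype.card V := by
  induction hlen : c.length using Nat.strong_induction_on generalizing u with
  | _ ℓ ih =>
  subst hlen
  by_cases hle : c.length ≤ Fintype.card V
  · exact ⟨u, c, hc, hle⟩
  obtain ⟨x, y, c₁, c₂, h₁, h₂, hsum⟩ := c.exists_loops_of_card_lt_length (not_le.mp hle)
  rw [← hsum, Nat.odd_add] at hc
  rcases Nat.even_or_odd c₂.length with he | ho
  · exact ih _ (by omega) c₁ (hc.mpr he) rfl
  · exact ih _ (by omega) c₂ ho rfl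

end Walk

theorem not_colorable_two_iff_exists_odd_loop_length_le_card [Fintype V] [DecidableEq V] :
    ¬ G.Colorable 2 ↔
      ∃ (u : V) (c : G.Walk u u), Odd c.length ∧ c.length ≤ Fintype.card V := by
  simp only [two_colorable_iff_forall_loop_even, not_forall, Nat.not_even_iff_odd]
  constructor
  · rintro ⟨u, c, hc⟩
    exact c.exists_odd_loop_length_le_card hc
  · rintro ⟨u, c, hc, -⟩
    exact ⟨u, c, hc⟩

theorem trace_adjMatrix_pow_pos_iff [Fintype V] [DecidableEq V] [DecidableRel G.Adj] (ℓ : ℕ) :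
    0 < Matrix.trace (G.adjMatrix ℕ ^ ℓ) ↔ ∃ (u : V) (c : G.Walk u u), c.length = ℓ := by
  simp only [Matrix.trace, Matrix.diag_apply, adjMatrix_pow_apply_eq_card_walk, Nat.cast_id,
    Finset.sum_pos_iff, Finset.mem_univ, true_and, Fintype.card_pos_iff, Set.coe_ofPred,
    nonempty_subtype]

end SimpleGraph

open SimpleGraph

theorem not_colorable_two_iff_trace_pos_general {V : Type*} [Fintype V] [DecidableEq V]
    (G : SimpleGraph V) [DecidableRel G.Adj] (n : ℕ) (hn : Fintype.card V = n) :
    ¬ G.Colorable 2 ↔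
      ∃ ℓ : ℕ, Odd ℓ ∧ 1 ≤ ℓ ∧ ℓ ≤ n ∧ 0 < Matrix.trace ((G.adjMatrix ℕ) ^ ℓ) := by
  simp only [not_colorable_two_iff_exists_odd_loop_length_le_card, trace_adjMatrix_pow_pos_iff, hn]
  constructor
  · rintro ⟨u, c, hodd, hle⟩
    exact ⟨c.length, hodd, hodd.pos, hle, u, c, rfl⟩
  · rintro ⟨ℓ, hodd, -, hle, u, c, rfl⟩
    exact ⟨u, c, hodd, hle⟩

/-- A connected simple graph on `n ≥ 1` vertices contains an odd cycle
(equivalently, is not 2-colorable) if and only if the trace of some odd power `A^ℓ`,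
`1 ≤ ℓ ≤ n`, of its adjacency matrix over `ℕ` is strictly positive. -/
theorem not_colorable_two_iff_trace_pos {V : Type*} [Fintype V] [DecidableEq V]
    (G : SimpleGraph V) [DecidableRel G.Adj] (n : ℕ) (hn : Fintype.card V = n)
    (hn1 : 1 ≤ n) (hconn : G.Connected) :
    ¬ G.Colorable 2 ↔
      ∃ ℓ : ℕ, Odd ℓ ∧ 1 ≤ ℓ ∧ ℓ ≤ n ∧ 0 < Matrix.trace ((G.adjMatrix ℕ) ^ ℓ) :=
  not_colorable_two_iff_trace_pos_general G n hn
end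

section
/- Let G be a simple graph on a finite nonempty vertex set V with edge set E, and suppose G is decodable (q odd sense). Then (i) b_G ≤ δ(G), the minimum degree of G, and (ii) b_G ≤ |E| − Γ(G), where Γ(G) is the maximum cut size of G. -/
/-!
Deleting the `δ(G)` edges at a vertex of minimum degree isolates it, and an isolated vertex is a
bipartite component. Deleting the `|E| - Γ(G)` edges that do not cross a maximum cut `U` leaves a
graph 2-coloured by membership in `U`, all of whose components are bipartite.
-/

/-- Decodability (over `GF(q)` with `q` odd) of a simple graph: every connected component
contains an odd cycle, i.e. no connected component is 2-colorable. -/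
def OddDecodable {V : Type*} (H : SimpleGraph V) : Prop :=
  ∀ c : H.ConnectedComponent, ¬ (H.induce c.supp).Colorable 2

/-- `uG G x` is the number of `x`-element subsets `D` of the edge set of `G` such that the
spanning subgraph `G − D` is not decodable (`q` odd sense). -/
noncomputable def uG {V : Type*} (G : SimpleGraph V) (x : ℕ) : ℕ :=
  Nat.card {D : Finset (Sym2 V) //
    ↑D ⊆ G.edgeSet ∧ D.card = x ∧ ¬ OddDecodable (G.deleteEdges ↑D)}

/-- `bCut G` is the least cardinality of a set `D` of edges of `G` such that `G − D` is
not decodable (`q` odd sense). -/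
noncomputable def bCut {V : Type*} (G : SimpleGraph V) : ℕ :=
  sInf {x : ℕ | 0 < uG G x}

/-- `cutSize G U` is the number of edges of `G` with exactly one endpoint in `U`. -/
noncomputable def cutSize {V : Type*} (G : SimpleGraph V) (U : Set V) : ℕ :=
  Nat.card {e : Sym2 V // e ∈ G.edgeSet ∧ ∃ a b, e = s(a, b) ∧ a ∈ U ∧ b ∉ U}

/-- `maxCut G` is the maximum cut size of `G`. -/
noncomputable def maxCut {V : Type*} (G : SimpleGraph V) : ℕ :=
  sSup {c : ℕ | ∃ U : Set V, c = cutSize G U}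

open SimpleGraph

section Decodability

variable {V : Type*} {H : SimpleGraph V}

lemma SimpleGraph.Colorable.not_oddDecodable [Nonempty V] (h : H.Colorable 2) :
    ¬ OddDecodable H := fun hdec =>
  hdec (H.connectedComponentMk (Classical.arbitrary V)) (h.of_hom (Embedding.induce _).toHom)

lemma SimpleGraph.IsIsolated.eq_of_reachable {v w : V} (hv : H.IsIsolated v)
    (hvw : H.Reachable v w) : w = v := by
  obtain ⟨p⟩ := hvw
  cases p with
  | nil => rfl
  | cons hadj _ => exact absurd hadj (hv _)

lemma SimpleGraph.IsIsolated.not_oddDecodable {v : V} (hv : H.IsIsolated v) :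
    ¬ OddDecodable H := by
  intro hdec
  refine hdec (H.connectedComponentMk v) ⟨Coloring.mk (fun _ => 0) ?_⟩
  rintro ⟨a, ha⟩ _ hadj
  have hav : a = v := hv.eq_of_reachable (ConnectedComponent.exact ha).symm
  subst hav
  exact absurd hadj (hv _)

end Decodability

lemma SimpleGraph.isIsolated_deleteIncidenceSet {V : Type*} (G : SimpleGraph V) (v : V) :
    (G.deleteIncidenceSet v).IsIsolated v := fun _ hadj =>
  (deleteIncidenceSet_adj.1 hadj).2.1 rfl

section Cut

variable {V : Type*} (G : SimpleGraph V)

def cutEdges (U : Set V) : Set (Sym2 V) :=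
  {e ∈ G.edgeSet | ∃ a b, e = s(a, b) ∧ a ∈ U ∧ b ∉ U}

lemma cutEdges_subset_edgeSet (U : Set V) : cutEdges G U ⊆ G.edgeSet :=
  Set.sep_subset _ _

lemma cutSize_eq_ncard_cutEdges (U : Set V) : cutSize G U = (cutEdges G U).ncard :=
  (Nat.card_coe_set_eq _).symm

lemma colorable_deleteEdges_sdiff_cutEdges (U : Set V) :
    (G.deleteEdges (G.edgeSet \ cutEdges G U)).Colorable 2 := by
  refine (Coloring.mk (fun w => w ∈ U) ?_).colorable.mono (by simp)
  intro a b hab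
  obtain ⟨hadj, hnot⟩ := deleteEdges_adj.1 hab
  obtain ⟨-, x, y, hxy, hx, hy⟩ : s(a, b) ∈ cutEdges G U := by
    by_contra hcut
    exact hnot ⟨hadj, hcut⟩
  rcases Sym2.eq_iff.1 hxy with ⟨rfl, rfl⟩ | ⟨rfl, rfl⟩ <;> simp [hx, hy]

lemma exists_cutSize_eq_maxCut [Finite V] : ∃ U, cutSize G U = maxCut G := by
  have hbdd : BddAbove {c : ℕ | ∃ U : Set V, c = cutSize G U} := by
    refine ⟨G.edgeSet.ncard, ?_⟩
    rintro c ⟨U, rfl⟩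
    rw [cutSize_eq_ncard_cutEdges]
    exact Set.ncard_le_ncard (cutEdges_subset_edgeSet G U)
  obtain ⟨U, hU⟩ := Nat.sSup_mem (by exact ⟨_, ∅, rfl⟩) hbdd
  exact ⟨U, hU.symm⟩

end Cut

lemma bCut_le_ncard {V : Type*} [Finite V] (G : SimpleGraph V) {D : Set (Sym2 V)}
    (hD : D ⊆ G.edgeSet) (h : ¬ OddDecodable (G.deleteEdges D)) : bCut G ≤ D.ncard := by
  refine Nat.sInf_le (Nat.card_pos_iff.2 ⟨⟨⟨D.toFinite.toFinset, ?_⟩⟩, inferInstance⟩)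
  exact ⟨by simpa using hD, (Set.ncard_eq_toFinset_card D).symm, by simpa using h⟩

lemma bCut_le_degree {V : Type*} [Fintype V] (G : SimpleGraph V) [DecidableRel G.Adj] (v : V) :
    bCut G ≤ G.degree v := by
  classical
  calc bCut G ≤ (G.incidenceSet v).ncard :=
        bCut_le_ncard G (G.incidenceSet_subset v)
          (G.isIsolated_deleteIncidenceSet v).not_oddDecodable
    _ = G.degree v := by
        rw [← coe_incidenceFinset, Set.ncard_coe_finset, card_incidenceFinset_eq_degree]

lemma bCut_le_card_edgeSet_sub_cutSize {V : Type*} [Finite V] [Nonempty V]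
    (G : SimpleGraph V) (U : Set V) : bCut G ≤ Nat.card G.edgeSet - cutSize G U := by
  calc bCut G ≤ (G.edgeSet \ cutEdges G U).ncard :=
        bCut_le_ncard G Set.sdiff_subset
          (colorable_deleteEdges_sdiff_cutEdges G U).not_oddDecodable
    _ = Nat.card G.edgeSet - cutSize G U := by
        rw [Set.ncard_sdiff (cutEdges_subset_edgeSet G U), Nat.card_coe_set_eq,
          cutSize_eq_ncard_cutEdges]

theorem bCut_le_minDegree_and_le_card_sub_maxCut_general {V : Type*} [Fintype V] [Nonempty V]
    (G : SimpleGraph V) [DecidableRel G.Adj] :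
    bCut G ≤ G.minDegree ∧ bCut G ≤ Nat.card G.edgeSet - maxCut G := by
  obtain ⟨v, hv⟩ := G.exists_minimal_degree_vertex
  obtain ⟨U, hU⟩ := exists_cutSize_eq_maxCut G
  exact ⟨hv ▸ bCut_le_degree G v, hU ▸ bCut_le_card_edgeSet_sub_cutSize G U⟩

/-- For a decodable (`q` odd sense) simple graph `G` on a finite nonempty
vertex set: (i) `b_G ≤ δ(G)`, the minimum degree, and (ii) `b_G ≤ |E| − Γ(G)`, where
`Γ(G)` is the maximum cut size. -/
theorem bCut_le_minDegree_and_le_card_sub_maxCut {V : Type*} [Fintype V] [Nonempty V]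
    (G : SimpleGraph V) [DecidableRel G.Adj] (hdec : OddDecodable G) :
    bCut G ≤ G.minDegree ∧ bCut G ≤ Nat.card G.edgeSet - maxCut G :=
  bCut_le_minDegree_and_le_card_sub_maxCut_general G
end

section
/- Let G be a simple graph with n vertices and m edges, and let Γ(G) denote its maximum cut size. Then (1) Γ(G) ≥ m/2 + (√(8m+1) − 1)/8, and (2) if G is connected, Γ(G) ≥ m/2 + (n−1)/4 (both inequalities over the reals). -/
/-!
For connected `G` one removes either a vertex of odd degree `d` or the two ends of an edge
meeting `d` edges in total, in such a way that the rest stays connected, and places the removed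
vertices on the better side of a large cut of the rest. A vertex of odd degree `d` gains
`(d + 1) / 2` cut edges, an edge `uv` gains `(d + 1) / 2` as well, since the two placements
`u ∈ U, v ∉ U` and `v ∈ U, u ∉ U` together cut `uv` twice and every other new edge once.
Either way the gain is at least `d / 2 + (removed vertices) / 4`, so induction gives
`Γ(G) ≥ m / 2 + (n - 1) / 4`. A suitable removal is found from the distance layers around a
root: a farthest vertex of odd degree, or two adjacent farthest vertices, or else a farthest
vertex `v₀` together with a neighbour `u` one layer closer; in the last case the other farthest
vertices have even degree, hence a neighbour other than `u`, which keeps them attached.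

For the bound in terms of `m` alone, add up the connected bound over the components:
with `t = ∑ (nᵢ - 1)` we get `4m + 2t ≤ 8Γ(G)` and `2m ≤ ∑ nᵢ (nᵢ - 1) ≤ t (t + 1)`,
that is `√(8m + 1) ≤ 2t + 1`.
-/

open Finset SimpleGraph

section Edwards

variable {V : Type*}

theorem exists_eq_sym2_mem_notMem_iff {U : Set V} {x y : V} :
    (∃ a b, s(x, y) = s(a, b) ∧ a ∈ U ∧ b ∉ U) ↔ (x ∈ U ↔ y ∉ U) := by
  constructor
  · rintro ⟨a, b, h, ha, hb⟩
    rcases Sym2.eq_iff.mp h with ⟨rfl, rfl⟩ | ⟨rfl, rfl⟩ <;> tauto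
  · intro h
    by_cases hx : x ∈ U
    · exact ⟨x, y, rfl, hx, h.mp hx⟩
    · exact ⟨y, x, Sym2.eq_swap, by tauto, hx⟩

theorem natCard_edgeSet (G : SimpleGraph V) [Fintype G.edgeSet] :
    Nat.card G.edgeSet = #G.edgeFinset := by
  rw [Nat.card_eq_fintype_card, card_edgeSet]

section Cut

variable [Fintype V] (G : SimpleGraph V)

open Classical in
theorem cutSize_eq_card_filter [Fintype G.edgeSet] (U : Set V) :
    cutSize G U = #{e ∈ G.edgeFinset | ∃ a b, e = s(a, b) ∧ a ∈ U ∧ b ∉ U} := by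
  rw [cutSize, Nat.card_eq_fintype_card, Fintype.card_subtype]
  congr 1
  ext e
  simp

theorem cutSize_le_maxCut (U : Set V) : cutSize G U ≤ maxCut G := by
  refine le_csSup ⟨Nat.card G.edgeSet, ?_⟩ ⟨U, rfl⟩
  rintro _ ⟨U', rfl⟩
  exact Nat.card_le_card_of_injective (fun e => ⟨e.1, e.2.1⟩)
    fun _ _ h => Subtype.ext (Subtype.mk.inj h)

theorem cutSize_congr {U U' : Set V} (h : ∀ x ∈ G.support, x ∈ U ↔ x ∈ U') :
    cutSize G U = cutSize G U' := by
  classical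
  rw [cutSize_eq_card_filter, cutSize_eq_card_filter]
  refine congrArg card (filter_congr fun e he => ?_)
  induction e using Sym2.ind with
  | _ a b =>
    have hab : G.Adj a b := mem_edgeFinset.mp he
    rw [exists_eq_sym2_mem_notMem_iff, exists_eq_sym2_mem_notMem_iff, h a ⟨b, hab⟩,
      h b ⟨a, hab.symm⟩]

theorem cutSize_deleteIncidenceSet_congr {x : V} {U U' : Set V}
    (h : ∀ y ≠ x, y ∈ U ↔ y ∈ U') :
    cutSize (G.deleteIncidenceSet x) U = cutSize (G.deleteIncidenceSet x) U' :=
  cutSize_congr _ fun y hy => h y (G.support_deleteIncidenceSet_subset x hy).2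

variable {G} {H : SimpleGraph V}

theorem cutSize_eq_add_cutSize_sdiff (hHG : H ≤ G) (U : Set V) :
    cutSize G U = cutSize H U + cutSize (G \ H) U := by
  classical
  rw [cutSize_eq_card_filter G, cutSize_eq_card_filter H, cutSize_eq_card_filter (G \ H)]
  have hsdiff : (G \ H).edgeFinset = G.edgeFinset \ H.edgeFinset := by
    ext
    simp
  rw [hsdiff, ← sdiff_union_of_subset (edgeFinset_mono hHG), filter_union,
    card_union_of_disjoint (disjoint_filter_filter sdiff_disjoint), add_comm,
    union_sdiff_cancel_right sdiff_disjoint]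

theorem natCard_edgeSet_eq_add_sdiff (hHG : H ≤ G) :
    Nat.card G.edgeSet = Nat.card H.edgeSet + Nat.card (G \ H).edgeSet := by
  simp only [Nat.card_coe_set_eq, edgeSet_sdiff]
  rw [← Set.ncard_sdiff_add_ncard_of_subset (edgeSet_mono hHG), add_comm]

end Cut

section DeleteIncidenceSet

variable [Fintype V] [DecidableEq V] (G : SimpleGraph V) [DecidableRel G.Adj]

theorem card_edgeFinset_eq_add_degree (x : V) :
    #G.edgeFinset = #(G.deleteIncidenceSet x).edgeFinset + G.degree x := by
  rw [card_edgeFinset_deleteIncidenceSet]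
  have := G.degree_le_card_edgeFinset x
  omega

theorem cutSize_eq_cutSize_deleteIncidenceSet_add (x : V) (U : Finset V) :
    cutSize G U =
      cutSize (G.deleteIncidenceSet x) U + #{w ∈ G.neighborFinset x | w ∈ U ↔ x ∉ U} := by
  classical
  have hinc : #{w ∈ G.neighborFinset x | w ∈ U ↔ x ∉ U} =
      #{e ∈ G.incidenceFinset x | ∃ a b, e = s(a, b) ∧ a ∈ (U : Set V) ∧ b ∉ (U : Set V)} := by
    refine card_bij (fun w _ => s(x, w)) (fun w hw => ?_)
      (fun _ _ _ _ => Sym2.congr_right.mp) fun e he => ?_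
    · rw [mem_filter, exists_eq_sym2_mem_notMem_iff, mem_incidenceFinset, mem_incidenceSet]
      simp only [mem_filter, mem_neighborFinset, mem_coe] at hw ⊢
      tauto
    · obtain ⟨heI, hcross⟩ := mem_filter.mp he
      rw [mem_incidenceFinset] at heI
      obtain ⟨w, rfl⟩ := Sym2.mem_iff_exists.mp heI.2
      rw [exists_eq_sym2_mem_notMem_iff] at hcross
      refine ⟨w, mem_filter.mpr ⟨(mem_neighborFinset _ _ _).mpr heI.1, ?_⟩, rfl⟩
      simp only [mem_coe] at hcross
      tauto
  rw [cutSize_eq_card_filter, cutSize_eq_card_filter, hinc,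
    edgeFinset_deleteIncidenceSet_eq_filter, incidenceFinset_eq_filter, filter_filter,
    filter_filter, ← card_filter_add_card_filter_not (p := (x ∉ ·))]
  simp only [filter_filter, not_not]
  congr 2 <;> ext <;> simp only [mem_filter] <;> tauto

theorem cutSize_eq_of_notMem {x : V} {U : Finset V} (hx : x ∉ U) :
    cutSize G U = cutSize (G.deleteIncidenceSet x) U + #{w ∈ G.neighborFinset x | w ∈ U} := by
  simp [cutSize_eq_cutSize_deleteIncidenceSet_add G x U, hx]

theorem cutSize_insert (x : V) (U : Finset V) :
    cutSize G ↑(insert x U) =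
      cutSize (G.deleteIncidenceSet x) U + #{w ∈ G.neighborFinset x | w ∉ U} := by
  rw [cutSize_eq_cutSize_deleteIncidenceSet_add G x,
    cutSize_deleteIncidenceSet_congr G (U' := U) fun y hy => by simp [hy]]
  refine congrArg (_ + ·) (congrArg card (filter_congr fun w hw => ?_))
  have hwx : w ≠ x := (G.ne_of_adj ((mem_neighborFinset _ _ _).mp hw)).symm
  simp [hwx]

theorem cutSize_add_cutSize_insert {x : V} {U : Finset V} (hx : x ∉ U) :
    cutSize G U + cutSize G ↑(insert x U) =
      2 * cutSize (G.deleteIncidenceSet x) U + G.degree x := by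
  rw [cutSize_eq_of_notMem G hx, cutSize_insert, ← card_neighborFinset_eq_degree,
    ← card_filter_add_card_filter_not (s := G.neighborFinset x) (p := (· ∈ U))]
  ring

theorem cutSize_insert_add_cutSize_insert_of_adj {u v : V} (huv : G.Adj u v) {U : Finset V}
    (hu : u ∉ U) (hv : v ∉ U) :
    cutSize G ↑(insert u U) + cutSize G ↑(insert v U) =
      2 * cutSize ((G.deleteIncidenceSet u).deleteIncidenceSet v) U + G.degree u +
        (G.deleteIncidenceSet u).degree v + 1 := by
  have hu' : u ∉ insert v U := by simp [hu, huv.ne]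
  have hinsert : {w ∈ G.neighborFinset u | w ∈ insert v U} =
      insert v {w ∈ G.neighborFinset u | w ∈ U} := by
    ext w
    simp only [mem_filter, mem_insert, mem_neighborFinset]
    constructor
    · rintro ⟨hw, rfl | hw'⟩ <;> tauto
    · rintro (rfl | ⟨hw, hw'⟩) <;> tauto
  rw [cutSize_insert, cutSize_eq_of_notMem _ hv, cutSize_eq_of_notMem G hu', hinsert,
    card_insert_of_notMem (by simp [hv]), cutSize_insert, ← card_neighborFinset_eq_degree,
    ← card_neighborFinset_eq_degree,
    ← card_filter_add_card_filter_not (s := G.neighborFinset u) (p := (· ∈ U)),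
    ← card_filter_add_card_filter_not (s := (G.deleteIncidenceSet u).neighborFinset v)
      (p := (· ∈ U))]
  ring

theorem exists_cutSize_of_odd_degree {x : V} (hx : Odd (G.degree x)) (U : Finset V) :
    ∃ U' : Finset V,
      2 * cutSize (G.deleteIncidenceSet x) U + G.degree x + 1 ≤ 2 * cutSize G U' := by
  have h := cutSize_add_cutSize_insert G (notMem_erase x U)
  rw [cutSize_deleteIncidenceSet_congr G (U' := U) fun y hy => by simp [hy]] at h
  obtain ⟨k, hk⟩ := hx
  rcases le_total (cutSize G (U.erase x)) (cutSize G ↑(insert x (U.erase x))) with h' | h'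
  · exact ⟨insert x (U.erase x), by omega⟩
  · exact ⟨U.erase x, by omega⟩

theorem exists_cutSize_of_adj {u v : V} (huv : G.Adj u v) (U : Finset V) :
    ∃ U' : Finset V, 2 * cutSize ((G.deleteIncidenceSet u).deleteIncidenceSet v) U +
      G.degree u + (G.deleteIncidenceSet u).degree v + 1 ≤ 2 * cutSize G U' := by
  set W := (U.erase u).erase v
  have h := cutSize_insert_add_cutSize_insert_of_adj G huv (U := W)
    (by simp [W, huv.ne]) (notMem_erase v _)
  have hW : cutSize ((G.deleteIncidenceSet u).deleteIncidenceSet v) W =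
      cutSize ((G.deleteIncidenceSet u).deleteIncidenceSet v) U :=
    cutSize_congr _ fun y hy => by
      obtain ⟨hy', hyv⟩ := (G.deleteIncidenceSet u).support_deleteIncidenceSet_subset v hy
      have hyu : y ≠ u := (G.support_deleteIncidenceSet_subset u hy').2
      simp [W, hyu, hyv]
  rcases le_total (cutSize G ↑(insert u W)) (cutSize G ↑(insert v W)) with h' | h'
  · exact ⟨insert v W, by omega⟩
  · exact ⟨insert u W, by omega⟩

end DeleteIncidenceSet

namespace SimpleGraph

variable {G : SimpleGraph V}

theorem Reachable.exists_adj_dist_add_one {a r : V} (h : G.Reachable a r) (ha : a ≠ r) :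
    ∃ y, G.Adj a y ∧ G.dist y r + 1 = G.dist a r := by
  obtain ⟨p, hp⟩ := h.exists_walk_length_eq_dist
  cases p with
  | nil => exact absurd rfl ha
  | cons hay q =>
    refine ⟨_, hay, le_antisymm ?_ ?_⟩
    · have := dist_le q
      rw [Walk.length_cons] at hp
      omega
    · have := hay.reachable.dist_triangle_left r
      rw [dist_eq_one_iff_adj.mpr hay] at this
      omega

theorem reachable_of_forall_dist_lt {H : SimpleGraph V} {P : V → Prop}
    (hH : ∀ x y, G.Adj x y → P x → P y → H.Adj x y) {a r : V} (hr : G.Reachable a r)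
    (ha : P a) (hP : ∀ x, G.dist x r < G.dist a r → P x) : H.Reachable a r := by
  induction hd : G.dist a r using Nat.strong_induction_on generalizing a with
  | _ n ih =>
    by_cases har : a = r
    · exact har ▸ Reachable.refl a
    obtain ⟨y, hay, hy⟩ := hr.exists_adj_dist_add_one har
    have hPy : P y := hP y (by omega)
    exact (hH a y hay ha hPy).reachable.trans (ih _ (by omega) (hay.reachable.symm.trans hr) hPy
      (fun x hx => hP x (by omega)) rfl)

theorem reachable_of_dist_le {H : SimpleGraph V} {P : V → Prop}
    (hH : ∀ x y, G.Adj x y → P x → P y → H.Adj x y) {a r : V} {D : ℕ} (hr : G.Reachable a r)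
    (ha : P a) (haD : G.dist a r ≤ D) (hP : ∀ x, ¬P x → G.dist x r = D) : H.Reachable a r :=
  reachable_of_forall_dist_lt hH hr ha fun x hx => by_contra fun hx' => by
    have := hP x hx'
    omega

theorem pairwise_reachable_of_forall_reachable {S : Set V} {r : V}
    (h : ∀ a ∈ S, G.Reachable a r) : S.Pairwise G.Reachable :=
  fun a ha b hb _ => (h a ha).trans (h b hb).symm

theorem deleteIncidenceSet_deleteIncidenceSet_adj {u v x y : V} :
    ((G.deleteIncidenceSet u).deleteIncidenceSet v).Adj x y ↔
      G.Adj x y ∧ (x ≠ u ∧ x ≠ v) ∧ (y ≠ u ∧ y ≠ v) := by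
  simp only [deleteIncidenceSet_adj]
  tauto

theorem ConnectedComponent.pairwise_reachable_support_spanningCoe (C : G.ConnectedComponent) :
    C.toSimpleGraph.spanningCoe.support.Pairwise C.toSimpleGraph.spanningCoe.Reachable := by
  rintro x ⟨x', hx⟩ y ⟨y', hy⟩ -
  exact (C.reachable_toSimpleGraph (C.adj_spanningCoe_toSimpleGraph.mp hx).1
    (C.adj_spanningCoe_toSimpleGraph.mp hy).1).map (Embedding.map _ _).toHom

theorem ConnectedComponent.notMem_supp_of_sdiff_adj (C : G.ConnectedComponent) {x y : V}
    (h : (G \ C.toSimpleGraph.spanningCoe).Adj x y) : x ∉ C.supp :=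
  fun hx => h.2 (C.adj_spanningCoe_toSimpleGraph.mpr ⟨hx, h.1⟩)

variable [Fintype V] [DecidableRel G.Adj]

theorem exists_adj_ne_of_even_degree {a y : V} (heven : Even (G.degree a)) (hay : G.Adj a y)
    (z : V) : ∃ x, G.Adj a x ∧ x ≠ z := by
  have hpos : 0 < G.degree a := G.degree_pos_iff_exists_adj a |>.mpr ⟨y, hay⟩
  have h : 1 < #(G.neighborFinset a) := by
    obtain ⟨k, hk⟩ := heven
    rw [card_neighborFinset_eq_degree]
    omega
  obtain ⟨x, hx, hxz⟩ := exists_mem_ne h z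
  exact ⟨x, (mem_neighborFinset _ _ _).mp hx, hxz⟩

variable [DecidableEq V]

theorem exists_adj_pairwise_reachable_of_even_degree {S : Finset V} {r v₀ : V} {D : ℕ}
    (hS : G.support ⊆ S) (hr : ∀ a ∈ S, G.Reachable a r) (hD : ∀ a ∈ S, G.dist a r ≤ D)
    (heven : ∀ a ∈ S, G.dist a r = D → Even (G.degree a))
    (hindep : ∀ a b, G.Adj a b → G.dist a r = D → G.dist b r < D)
    (hv₀ : v₀ ∈ S) (hv₀D : G.dist v₀ r = D) (hv₀r : v₀ ≠ r) :
    ∃ u, G.Adj v₀ u ∧ (↑((S.erase v₀).erase u) : Set V).Pairwise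
      ((G.deleteIncidenceSet v₀).deleteIncidenceSet u).Reachable := by
  obtain ⟨u, hv₀u, huD⟩ := (hr v₀ hv₀).exists_adj_dist_add_one hv₀r
  -- If `u = r` then `D = 1`, and a second neighbour of `v₀` would be a farthest vertex too.
  have hur : u ≠ r := by
    rintro rfl
    obtain ⟨x, hv₀x, hxr⟩ := exists_adj_ne_of_even_degree (heven v₀ hv₀ hv₀D) hv₀u u
    have hx := hindep v₀ x hv₀x hv₀D
    rw [dist_self] at huD
    exact hxr ((hr x (hS ⟨v₀, hv₀x.symm⟩)).dist_eq_zero_iff.mp (by omega))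
  have hH : ∀ x y, G.Adj x y → (x ≠ v₀ ∧ x ≠ u) → (y ≠ v₀ ∧ y ≠ u) →
      ((G.deleteIncidenceSet v₀).deleteIncidenceSet u).Adj x y :=
    fun x y h hx hy => deleteIncidenceSet_deleteIncidenceSet_adj.mpr ⟨h, hx, hy⟩
  have hnear : ∀ a ∈ S, G.dist a r < D → a ≠ u →
      ((G.deleteIncidenceSet v₀).deleteIncidenceSet u).Reachable a r := by
    refine fun a ha haD hau =>
      reachable_of_forall_dist_lt hH (hr a ha) ⟨?_, hau⟩ fun x hx => ⟨?_, ?_⟩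
    all_goals rintro rfl; omega
  refine ⟨u, hv₀u, pairwise_reachable_of_forall_reachable (r := r) fun a ha => ?_⟩
  obtain ⟨⟨haS, hav₀⟩, hau⟩ : (a ∈ S ∧ a ≠ v₀) ∧ a ≠ u := by simpa using ha
  rcases (hD a haS).lt_or_eq with haD | haD
  · exact hnear a haS haD hau
  have har : a ≠ r := by
    rintro rfl
    rw [dist_self] at haD
    omega
  obtain ⟨y, hay, -⟩ := (hr a haS).exists_adj_dist_add_one har
  obtain ⟨x, hax, hxu⟩ := exists_adj_ne_of_even_degree (heven a haS haD) hay u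
  have hxD := hindep a x hax haD
  exact (hH a x hax ⟨hav₀, hau⟩ ⟨by rintro rfl; omega, hxu⟩).reachable.trans
    (hnear x (hS ⟨a, hax.symm⟩) hxD hxu)

theorem exists_odd_degree_or_adj_pairwise_reachable {S : Finset V} (hS : G.support ⊆ S)
    (hconn : (S : Set V).Pairwise G.Reachable) (hS1 : 1 < #S) :
    (∃ v, Odd (G.degree v) ∧
      (↑(S.erase v) : Set V).Pairwise (G.deleteIncidenceSet v).Reachable) ∨
    ∃ u v, G.Adj u v ∧ (↑((S.erase u).erase v) : Set V).Pairwise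
      ((G.deleteIncidenceSet u).deleteIncidenceSet v).Reachable := by
  obtain ⟨r, hrS⟩ := card_pos.mp (zero_lt_one.trans hS1)
  have hr : ∀ a ∈ S, G.Reachable a r := fun a ha => by
    by_cases h : a = r
    · exact h ▸ Reachable.refl a
    · exact hconn ha hrS h
  obtain ⟨v₀, hv₀, hv₀D⟩ := exists_mem_eq_sup S ⟨r, hrS⟩ (G.dist · r)
  set D := S.sup (G.dist · r)
  have hD : ∀ a ∈ S, G.dist a r ≤ D := fun a ha => le_sup (f := (G.dist · r)) ha
  by_cases hodd : ∃ v ∈ S, G.dist v r = D ∧ Odd (G.degree v)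
  · obtain ⟨v, -, hvD, hv⟩ := hodd
    refine Or.inl ⟨v, hv, pairwise_reachable_of_forall_reachable (r := r) fun a ha => ?_⟩
    exact reachable_of_dist_le (P := (· ≠ v))
      (fun x y h hx hy => deleteIncidenceSet_adj.mpr ⟨h, hx, hy⟩) (hr a (mem_of_mem_erase ha))
      (ne_of_mem_erase ha) (hD a (mem_of_mem_erase ha)) fun x hx => by rwa [not_not.mp hx]
  by_cases hadj : ∃ u ∈ S, ∃ v ∈ S, G.dist u r = D ∧ G.dist v r = D ∧ G.Adj u v
  · obtain ⟨u, -, v, -, huD, hvD, huv⟩ := hadj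
    refine Or.inr ⟨u, v, huv, pairwise_reachable_of_forall_reachable (r := r) fun a ha => ?_⟩
    obtain ⟨⟨haS, hau⟩, hav⟩ : (a ∈ S ∧ a ≠ u) ∧ a ≠ v := by simpa using ha
    refine reachable_of_dist_le (P := fun x => x ≠ u ∧ x ≠ v)
      (fun x y h hx hy => deleteIncidenceSet_deleteIncidenceSet_adj.mpr ⟨h, hx, hy⟩)
      (hr a haS) ⟨hau, hav⟩ (hD a haS) fun x hx => ?_
    rcases not_and_or.mp hx with h | h <;> rw [not_not.mp h] <;> assumption
  push Not at hodd hadj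
  have hv₀r : v₀ ≠ r := by
    obtain ⟨a, haS, har⟩ := exists_mem_ne hS1 r
    have := (hr a haS).dist_eq_zero_iff.not.mpr har
    have := hD a haS
    rintro rfl
    rw [dist_self] at hv₀D
    omega
  refine Or.inr ⟨v₀, exists_adj_pairwise_reachable_of_even_degree hS hr hD
    (fun a ha haD => Nat.not_odd_iff_even.mp (hodd a ha haD)) (fun a b hab haD => ?_) hv₀
    hv₀D.symm hv₀r⟩
  have hb : b ∈ S := hS ⟨a, hab.symm⟩
  exact (hD b hb).lt_of_ne fun hbD => hadj a (hS ⟨b, hab⟩) b hb haD hbD hab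

end SimpleGraph

def HasCutExcess (G : SimpleGraph V) (t : ℕ) : Prop :=
  ∃ U : Set V, 4 * Nat.card G.edgeSet + 2 * t ≤ 8 * cutSize G U ∧
    2 * Nat.card G.edgeSet ≤ t * (t + 1)

section Connected

variable [Fintype V] [DecidableEq V] {G : SimpleGraph V} [DecidableRel G.Adj]

theorem card_edgeFinset_le_choose_two_of_support_subset {S : Finset V} (hS : G.support ⊆ S) :
    #G.edgeFinset ≤ (#S).choose 2 := by
  classical
  have h := card_edgeFinset_le_card_choose_two (G := G.induce (S : Set V))
  simp only [Finset.coe_sort_coe, Fintype.card_coe] at h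
  convert h using 1
  rw [← card_edgeFinset_induce_of_support_subset hS]
  congr!

theorem exists_cutSize_of_pairwise_reachable {S : Finset V} (hS : G.support ⊆ S)
    (hconn : (S : Set V).Pairwise G.Reachable) :
    ∃ U : Finset V, 4 * #G.edgeFinset + 2 * #S ≤ 8 * cutSize G U + 2 := by
  induction hn : #S using Nat.strong_induction_on generalizing G S with
  | _ n ih =>
  rcases le_or_gt #S 1 with hS1 | hS1
  · have := card_edgeFinset_le_choose_two_of_support_subset hS
    rw [Nat.choose_eq_zero_of_lt (by omega)] at this
    exact ⟨∅, by omega⟩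
  rcases exists_odd_degree_or_adj_pairwise_reachable hS hconn hS1 with
    ⟨v, hv, hconn'⟩ | ⟨u, v, huv, hconn'⟩
  · have hvS : v ∈ S := hS ((G.degree_pos_iff_exists_adj v).mp hv.pos)
    have hS' : (G.deleteIncidenceSet v).support ⊆ ↑(S.erase v) := by
      rw [coe_erase]
      exact (G.support_deleteIncidenceSet_subset v).trans (Set.sdiff_subset_sdiff_left hS)
    have hcard := card_erase_of_mem hvS
    obtain ⟨U', hU'⟩ := ih _ (by omega) hS' hconn' rfl
    obtain ⟨U, hU⟩ := exists_cutSize_of_odd_degree G hv U'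
    have := card_edgeFinset_eq_add_degree G v
    exact ⟨U, by omega⟩
  · have huS : u ∈ S := hS ⟨v, huv⟩
    have hvS : v ∈ S.erase u := mem_erase.mpr ⟨huv.ne.symm, hS ⟨u, huv.symm⟩⟩
    have hS' : ((G.deleteIncidenceSet u).deleteIncidenceSet v).support ⊆
        ↑((S.erase u).erase v) := by
      rw [coe_erase, coe_erase]
      exact ((G.deleteIncidenceSet u).support_deleteIncidenceSet_subset v).trans
        (Set.sdiff_subset_sdiff_left ((G.support_deleteIncidenceSet_subset u).trans
          (Set.sdiff_subset_sdiff_left hS)))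
    have hcard₁ := card_erase_of_mem huS
    have hcard₂ := card_erase_of_mem hvS
    obtain ⟨U', hU'⟩ := ih _ (by omega) hS' hconn' rfl
    obtain ⟨U, hU⟩ := exists_cutSize_of_adj G huv U'
    have := card_edgeFinset_eq_add_degree G u
    have := card_edgeFinset_eq_add_degree (G.deleteIncidenceSet u) v
    exact ⟨U, by omega⟩

theorem exists_hasCutExcess_of_pairwise_reachable_support
    (hconn : G.support.Pairwise G.Reachable) : ∃ t, HasCutExcess G t := by
  have hS : G.support ⊆ ↑G.support.toFinset := by simp
  obtain ⟨U, hU⟩ := exists_cutSize_of_pairwise_reachable hS (by simpa using hconn)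
  have hE := card_edgeFinset_le_choose_two_of_support_subset hS
  simp only [HasCutExcess, natCard_edgeSet]
  rcases Nat.eq_zero_or_pos #G.support.toFinset with h0 | hpos
  · rw [h0, Nat.choose_zero_succ, Nat.le_zero] at hE
    exact ⟨0, U, by omega, by omega⟩
  · obtain ⟨t, ht⟩ := Nat.exists_eq_add_one_of_ne_zero hpos.ne'
    rw [ht, Nat.choose_two_right, Nat.add_sub_cancel] at hE
    rw [ht] at hU
    have := Nat.mul_div_le ((t + 1) * t) 2
    exact ⟨t, U, by omega, by rw [mul_comm t]; omega⟩

end Connected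

section Components

variable [Fintype V] {G : SimpleGraph V}

theorem HasCutExcess.of_sdiff {H : SimpleGraph V} {s : Set V} {t₁ t₂ : ℕ} (hHG : H ≤ G)
    (hH : H.support ⊆ s) (hGH : (G \ H).support ⊆ sᶜ) (h₁ : HasCutExcess H t₁)
    (h₂ : HasCutExcess (G \ H) t₂) :
    HasCutExcess G (t₁ + t₂) := by
  obtain ⟨U₁, h₁, h₁'⟩ := h₁
  obtain ⟨U₂, h₂, h₂'⟩ := h₂
  have hcut : cutSize G (s ∩ U₁ ∪ sᶜ ∩ U₂) = cutSize H U₁ + cutSize (G \ H) U₂ := by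
    rw [cutSize_eq_add_cutSize_sdiff hHG]
    congr 1 <;> refine cutSize_congr _ fun x hx => ?_
    · have : x ∈ s := hH hx
      simp [this]
    · have : x ∉ s := hGH hx
      simp [this]
  have hE := natCard_edgeSet_eq_add_sdiff hHG
  exact ⟨s ∩ U₁ ∪ sᶜ ∩ U₂, by omega, by nlinarith⟩

theorem exists_hasCutExcess (G : SimpleGraph V) : ∃ t, HasCutExcess G t := by
  classical
  induction hn : G.support.ncard using Nat.strong_induction_on generalizing G with
  | _ n ih =>
  rcases G.support.eq_empty_or_nonempty with h0 | ⟨u, hu⟩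
  · exact exists_hasCutExcess_of_pairwise_reachable_support (by simp [h0])
  let C := G.connectedComponentMk u
  have hHG : C.toSimpleGraph.spanningCoe ≤ G := G.spanningCoe_induce_le C.supp
  have hGH : (G \ C.toSimpleGraph.spanningCoe).support ⊆ C.suppᶜ :=
    fun x ⟨y, hxy⟩ => C.notMem_supp_of_sdiff_adj hxy
  have hlt : (G \ C.toSimpleGraph.spanningCoe).support.ncard < n :=
    hn ▸ Set.ncard_lt_ncard ⟨support_mono sdiff_le,
      fun h => hGH (h hu) ConnectedComponent.connectedComponentMk_mem⟩
  obtain ⟨t₁, h₁⟩ := exists_hasCutExcess_of_pairwise_reachable_support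
    C.pairwise_reachable_support_spanningCoe
  obtain ⟨t₂, h₂⟩ := ih _ hlt _ rfl
  exact ⟨_, h₁.of_sdiff hHG (fun x ⟨y, hxy⟩ => (C.adj_spanningCoe_toSimpleGraph.mp hxy).1)
    hGH h₂⟩

theorem HasCutExcess.le_maxCut {t : ℕ} (h : HasCutExcess G t) :
    (Nat.card G.edgeSet : ℝ) / 2 + (√(8 * Nat.card G.edgeSet + 1) - 1) / 8 ≤ maxCut G := by
  obtain ⟨U, h₁, h₂⟩ := h
  have hU : (cutSize G U : ℝ) ≤ maxCut G := by exact_mod_cast cutSize_le_maxCut G U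
  have h₁' : (4 * Nat.card G.edgeSet + 2 * t : ℝ) ≤ 8 * cutSize G U := by exact_mod_cast h₁
  have h₂' : (2 * Nat.card G.edgeSet : ℝ) ≤ t * (t + 1) := by exact_mod_cast h₂
  have hsqrt : √(8 * Nat.card G.edgeSet + 1) ≤ 2 * t + 1 :=
    Real.sqrt_le_iff.mpr ⟨by positivity, by nlinarith⟩
  linarith

end Components

end Edwards

/-- Edwards' bounds. For a simple graph `G` with `n` vertices and `m`
edges: (1) `Γ(G) ≥ m/2 + (√(8m+1) − 1)/8`, and (2) if `G` is connected,
`Γ(G) ≥ m/2 + (n−1)/4`. -/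
theorem edwards_maxCut_bounds {V : Type*} [Fintype V] (G : SimpleGraph V) (n m : ℕ)
    (hn : Fintype.card V = n) (hm : Nat.card G.edgeSet = m) :
    (m : ℝ) / 2 + (Real.sqrt (8 * m + 1) - 1) / 8 ≤ (maxCut G : ℝ) ∧
      (G.Connected → (m : ℝ) / 2 + ((n : ℝ) - 1) / 4 ≤ (maxCut G : ℝ)) := by
  classical
  subst hn hm
  obtain ⟨t, ht⟩ := exists_hasCutExcess G
  refine ⟨ht.le_maxCut, fun hconn => ?_⟩
  obtain ⟨U, hU⟩ := exists_cutSize_of_pairwise_reachable (G := G) (S := univ) (by simp)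
    fun a _ b _ _ => hconn.preconnected a b
  rw [card_univ, ← natCard_edgeSet] at hU
  have hU' : (4 * Nat.card G.edgeSet + 2 * Fintype.card V : ℝ) ≤ 8 * cutSize G U + 2 := by
    exact_mod_cast hU
  have hmax : (cutSize G U : ℝ) ≤ maxCut G := by exact_mod_cast cutSize_le_maxCut G U
  linarith
end

section
/- Let G be a simple graph on a finite nonempty vertex set V with n vertices and m edges, and suppose G is decodable (q odd sense). Then (1) b_G ≤ m/2 − (√(8m+1) − 1)/8, and (2) if G is connected, b_G ≤ m/2 − (n−1)/4 (both inequalities over the reals). -/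
/-!
Write `b = bCut G`, `n = |V|`, `m = |E|`. Deleting the edges at a vertex isolates it, so `b` is at
most every degree; hence `b < n` and `n b ≤ 2m`. Decodability makes the coding map
`x ↦ (x u + x w)_{uw ∈ E}` injective over `ℚ`: on a component containing an odd cycle, a kernel
vector has constant absolute value and alternates in sign along edges, so it would 2-colour the
component unless it vanishes. Thus `n ≤ m`, and when `m ≤ n` deleting any one edge already
destroys decodability, so `b ≤ 1`. On four vertices, the cut `{w, x} | {y, z}` leaves only `wx`
and `yz` inside its sides, so `b ≤ 2`, and `b ≤ 1` if `wx` is not an edge.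

These constraints on `(b, n, m)` give both bounds, using
`m/2 - (√(8m+1) - 1)/8 = ((√(8m+1) - 1)/4)^2` for the first: for `b ≥ 4` it suffices that
`b (b + 1) ≤ n b ≤ 2m`, while `b ≤ 1`, `b = 2`, `b = 3` force `m ≥ 3`, `m ≥ 6`, `m ≥ 8`.
-/

open Finset

namespace SimpleGraph

variable {V : Type*} {G : SimpleGraph V}

theorem not_oddDecodable_of_colorable [Nonempty V] (h : G.Colorable 2) : ¬ OddDecodable G :=
  fun hG => hG (G.connectedComponentMk (Classical.arbitrary V))
    (h.of_hom (Embedding.induce _).toHom)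

theorem not_oddDecodable_of_isolated {v : V} (hv : ∀ w, ¬ G.Adj v w) : ¬ OddDecodable G := by
  have eq_of_reachable {u : V} (hu : G.Reachable v u) : u = v := by
    obtain ⟨p⟩ := hu
    cases p with
    | nil => rfl
    | cons h _ => exact absurd h (hv _)
  refine fun hG => hG (G.connectedComponentMk v) ⟨Coloring.mk (fun _ => 0) ?_⟩
  rintro ⟨u, hu⟩ ⟨w, hw⟩ huw
  obtain rfl := eq_of_reachable (ConnectedComponent.exact hu).symm
  exact absurd huw (hv w)

theorem bCut_le_card [Finite V] {D : Finset (Sym2 V)} (hD : ↑D ⊆ G.edgeSet)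
    (h : ¬ OddDecodable (G.deleteEdges ↑D)) : bCut G ≤ #D := by
  have : Nonempty {D' : Finset (Sym2 V) //
      ↑D' ⊆ G.edgeSet ∧ #D' = #D ∧ ¬ OddDecodable (G.deleteEdges ↑D')} := ⟨⟨D, hD, rfl, h⟩⟩
  exact Nat.sInf_le Nat.card_pos

theorem bCut_le_card_filter_of_colorable [Finite V] [Nonempty V] [DecidablePred (· ∈ G.edgeSet)]
    (D : Finset (Sym2 V)) (h : (G.deleteEdges ↑D).Colorable 2) :
    bCut G ≤ #{e ∈ D | e ∈ G.edgeSet} := by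
  refine bCut_le_card (fun e he => (mem_filter.mp he).2) (not_oddDecodable_of_colorable ?_)
  convert h using 1
  ext u w
  simp only [deleteEdges_adj, coe_filter, and_congr_right_iff]
  intro huw
  simp [huw]

theorem bCut_le_degree [Fintype V] [DecidableRel G.Adj] (v : V) : bCut G ≤ G.degree v := by
  classical
  rw [← card_incidenceFinset_eq_degree]
  refine bCut_le_card (fun e he => (mem_incidenceFinset _ _ _).mp he |>.1)
    (not_oddDecodable_of_isolated (v := v) fun w hvw => ?_)
  rw [deleteEdges_adj] at hvw
  exact hvw.2 ((mem_incidenceFinset _ _ _).mpr ⟨hvw.1, Sym2.mem_mk_left v w⟩)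

/-- The coding scheme: the packet `x u + x w` is transmitted along each edge `s(u, w)`. -/
def edgeSumMap (G : SimpleGraph V) (K : Type*) [CommRing K] : (V → K) →ₗ[K] (G.edgeSet → K) where
  toFun x e := Sym2.lift ⟨fun u w => x u + x w, fun _ _ => add_comm _ _⟩ e
  map_add' x y := by
    ext ⟨e, _⟩
    induction e using Sym2.ind
    simp only [Sym2.lift_mk, Pi.add_apply]
    ring
  map_smul' c x := by
    ext ⟨e, _⟩
    induction e using Sym2.ind
    simp only [Sym2.lift_mk, Pi.smul_apply, smul_eq_mul, RingHom.id_apply]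
    ring

theorem edgeSumMap_apply_mk {K : Type*} [CommRing K] (x : V → K) {u w : V} (h : G.Adj u w) :
    G.edgeSumMap K x ⟨s(u, w), h⟩ = x u + x w := rfl

theorem Reachable.abs_eq_of_forall_adj_add_eq_zero {K : Type*} [AddCommGroup K] [LinearOrder K]
    [IsOrderedAddMonoid K] {x : V → K} (hx : ∀ u w, G.Adj u w → x u + x w = 0) {u w : V}
    (h : G.Reachable u w) : |x u| = |x w| := by
  obtain ⟨p⟩ := h
  induction p with
  | nil => rfl
  | cons h _ ih => rw [← ih, eq_neg_of_add_eq_zero_left (hx _ _ h), abs_neg]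

theorem edgeSumMap_injective {K : Type*} [CommRing K] [LinearOrder K] [IsStrictOrderedRing K]
    (hG : OddDecodable G) : Function.Injective (G.edgeSumMap K) := by
  refine (injective_iff_map_eq_zero _).mpr fun x hx => funext fun v => by_contra fun hv => ?_
  have hadj (u w : V) (h : G.Adj u w) : x u + x w = 0 := by
    simpa [edgeSumMap_apply_mk] using congr_fun hx ⟨s(u, w), h⟩
  refine hG (G.connectedComponentMk v) ⟨Coloring.mk (fun u => if 0 < x u then 0 else 1) ?_⟩
  rintro ⟨u, hu⟩ ⟨w, hw⟩ huw
  have ne_zero {y : V} (hy : G.connectedComponentMk y = G.connectedComponentMk v) : x y ≠ 0 := by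
    rw [← abs_ne_zero, (ConnectedComponent.exact hy).abs_eq_of_forall_adj_add_eq_zero hadj,
      abs_ne_zero]
    exact hv
  have hsum := hadj u w huw
  split_ifs with hu' hw' hw'
  · exact absurd hsum (add_pos hu' hw').ne'
  · decide
  · decide
  · exact absurd hsum
      (add_neg ((not_lt.mp hu').lt_of_ne (ne_zero hu)) ((not_lt.mp hw').lt_of_ne (ne_zero hw))).ne

theorem card_le_card_edgeSet_of_oddDecodable [Fintype V] (hG : OddDecodable G) :
    Fintype.card V ≤ Nat.card G.edgeSet := by
  have : Fintype G.edgeSet := Fintype.ofFinite _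
  simpa [Module.finrank_fintype_fun_eq_card, Nat.card_eq_fintype_card] using
    LinearMap.finrank_le_finrank_of_injective (edgeSumMap_injective (K := ℚ) hG)

theorem bCut_le_one_of_card_edgeSet_le [Fintype V] [Nonempty V] (hG : OddDecodable G)
    (hm : Nat.card G.edgeSet ≤ Fintype.card V) : bCut G ≤ 1 := by
  have hpos : 0 < Nat.card G.edgeSet :=
    Fintype.card_pos.trans_le (card_le_card_edgeSet_of_oddDecodable hG)
  obtain ⟨⟨e, he⟩⟩ := Nat.card_pos_iff.mp hpos |>.1
  refine (bCut_le_card (D := {e}) (by simpa using he) fun hG' => ?_).trans_eq (card_singleton e)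
  have hcard : Nat.card (G.deleteEdges ↑({e} : Finset (Sym2 V))).edgeSet + 1
      = Nat.card G.edgeSet := by
    rw [coe_singleton, edgeSet_deleteEdges, Nat.card_coe_set_eq, Nat.card_coe_set_eq,
      Set.ncard_sdiff_singleton_add_one he]
  have := card_le_card_edgeSet_of_oddDecodable hG'
  omega

theorem bCut_lt_card [Fintype V] [Nonempty V] : bCut G < Fintype.card V := by
  classical
  exact (bCut_le_degree (Classical.arbitrary V)).trans_lt (G.degree_lt_card_verts _)

theorem card_mul_bCut_le [Fintype V] : Fintype.card V * bCut G ≤ 2 * Nat.card G.edgeSet := by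
  classical
  calc Fintype.card V * bCut G = ∑ _v : V, bCut G := by simp
    _ ≤ ∑ v, G.degree v := sum_le_sum fun v _ => bCut_le_degree v
    _ = 2 * Nat.card G.edgeSet := by
      rw [sum_degrees_eq_twice_card_edges, edgeFinset_card, Nat.card_eq_fintype_card]

theorem card_edgeSet_le_choose_two [Fintype V] :
    Nat.card G.edgeSet ≤ (Fintype.card V).choose 2 := by
  classical
  rw [Nat.card_eq_fintype_card, ← edgeFinset_card]
  exact card_edgeFinset_le_card_choose_two

theorem exists_colorable_deleteEdges_pair [Fintype V] (h4 : Fintype.card V = 4) {w x : V}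
    (hwx : w ≠ x) : ∃ y z : V, (G.deleteEdges {s(w, x), s(y, z)}).Colorable 2 := by
  classical
  obtain ⟨y, z, -, hyz⟩ := card_eq_two.mp <| show #({w, x}ᶜ : Finset V) = 2 by
    rw [card_compl, card_pair hwx, h4]
  have hcover (v : V) : v = w ∨ v = x ∨ v = y ∨ v = z := by
    by_cases hv : v ∈ ({w, x} : Finset V)
    · simp only [mem_insert, mem_singleton] at hv
      tauto
    · rw [← mem_compl, hyz] at hv
      simp_all
  refine ⟨y, z, ⟨Coloring.mk (fun v => if v = w ∨ v = x then (0 : Fin 2) else 1) ?_⟩⟩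
  intro a b hab
  simp only [deleteEdges_adj, Set.mem_insert_iff, Set.mem_singleton_iff, Sym2.eq_iff] at hab
  rcases hcover a with rfl | rfl | rfl | rfl <;> rcases hcover b with rfl | rfl | rfl | rfl <;>
    simp_all [hab.1.ne, hab.1.ne.symm]

theorem bCut_le_two_of_card_eq_four [Fintype V] (h4 : Fintype.card V = 4) : bCut G ≤ 2 := by
  classical
  have : Nonempty V := Fintype.card_pos_iff.mp (by omega)
  obtain ⟨w, x, hwx⟩ := Fintype.exists_pair_of_one_lt_card (by omega : 1 < Fintype.card V)
  obtain ⟨y, z, hcol⟩ := exists_colorable_deleteEdges_pair (G := G) h4 hwx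
  calc bCut G ≤ #{e ∈ {s(w, x), s(y, z)} | e ∈ G.edgeSet} :=
        bCut_le_card_filter_of_colorable _ (by simpa using hcol)
    _ ≤ #{s(w, x), s(y, z)} := card_filter_le _ _
    _ ≤ 2 := card_le_two

theorem exists_ne_not_adj_of_card_edgeSet_lt [Fintype V]
    (h : Nat.card G.edgeSet < (Fintype.card V).choose 2) : ∃ w x, w ≠ x ∧ ¬ G.Adj w x := by
  classical
  by_contra! hG
  obtain rfl : G = ⊤ := by
    ext w x
    exact ⟨Adj.ne, hG w x⟩
  rw [Nat.card_eq_fintype_card, ← edgeFinset_card, card_edgeFinset_top_eq_card_choose_two] at h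
  exact h.false

theorem bCut_le_one_of_card_eq_four [Fintype V] (h4 : Fintype.card V = 4)
    (hm : Nat.card G.edgeSet ≤ 5) : bCut G ≤ 1 := by
  classical
  have : Nonempty V := Fintype.card_pos_iff.mp (by omega)
  obtain ⟨w, x, hwx, hnadj⟩ := exists_ne_not_adj_of_card_edgeSet_lt (G := G)
    (hm.trans_lt (by rw [h4]; decide))
  obtain ⟨y, z, hcol⟩ := exists_colorable_deleteEdges_pair (G := G) h4 hwx
  calc bCut G ≤ #{e ∈ {s(w, x), s(y, z)} | e ∈ G.edgeSet} :=
        bCut_le_card_filter_of_colorable _ (by simpa using hcol)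
    _ ≤ #{s(y, z)} := card_le_card fun e he => by
        simp only [mem_filter, mem_insert, mem_singleton] at he ⊢
        rcases he with ⟨rfl | rfl, he⟩
        · exact absurd he hnadj
        · rfl
    _ = 1 := card_singleton _

end SimpleGraph

theorem sq_le_edwards {m : ℕ} {t : ℝ} (ht : 1 ≤ t) (htm : t ^ 2 ≤ 8 * m + 1) :
    ((t - 1) / 4) ^ 2 ≤ (m : ℝ) / 2 - (√(8 * m + 1) - 1) / 8 := by
  have hs : √(8 * m + 1) ^ 2 = 8 * m + 1 := Real.sq_sqrt (by positivity)
  have hts : t ≤ √(8 * m + 1) := Real.le_sqrt_of_sq_le htm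
  calc ((t - 1) / 4) ^ 2 ≤ ((√(8 * m + 1) - 1) / 4) ^ 2 := by gcongr
    _ = (m : ℝ) / 2 - (√(8 * m + 1) - 1) / 8 := by linear_combination hs / 16

/-- The facts about `b = bCut G`, `n = |V|` and `m = |E|` of a decodable graph `G` from which both
bounds follow. -/
structure DecodableCounts (b n m : ℕ) : Prop where
  lt_card : b < n
  card_mul_le : n * b ≤ 2 * m
  card_le_edges : n ≤ m
  edges_le_choose : m ≤ n.choose 2
  le_one_of_edges_le : m ≤ n → b ≤ 1
  le_two_of_card_eq_four : n = 4 → b ≤ 2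
  le_one_of_card_eq_four : n = 4 → m ≤ 5 → b ≤ 1

namespace DecodableCounts

variable {b n m : ℕ}

theorem three_le_card (h : DecodableCounts b n m) : 3 ≤ n := by
  have := h.card_le_edges.trans h.edges_le_choose
  have := h.lt_card
  by_contra! hn
  interval_cases n <;> simp_all

theorem six_le_edges_of_two_le (h : DecodableCounts b n m) (hb : 2 ≤ b) : 6 ≤ m := by
  have := h.three_le_card
  have hmn : n < m := by by_contra! hmn; have := h.le_one_of_edges_le hmn; omega
  rcases (by omega : n = 3 ∨ n = 4 ∨ 5 ≤ n) with rfl | rfl | hn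
  · have := h.edges_le_choose; simp [Nat.choose] at this; omega
  · by_contra! hm; have := h.le_one_of_card_eq_four rfl (by omega); omega
  · omega

theorem eight_le_edges_of_three_le (h : DecodableCounts b n m) (hb : 3 ≤ b) : 8 ≤ m := by
  have := h.lt_card
  rcases (by omega : n = 4 ∨ 5 ≤ n) with rfl | hn
  · have := h.le_two_of_card_eq_four rfl; omega
  · have := Nat.mul_le_mul hn hb; have := h.card_mul_le; omega

theorem four_mul_add_le (h : DecodableCounts b n m) : 4 * b + n ≤ 2 * m + 1 := by
  have := h.card_le_edges
  have := h.card_mul_le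
  have := h.lt_card
  rcases (by omega : b ≤ 1 ∨ b = 2 ∨ b = 3 ∨ 4 ≤ b) with hb | rfl | rfl | hb
  · have := h.three_le_card; omega
  · have := h.six_le_edges_of_two_le le_rfl
    have : n < m := by by_contra! hmn; have := h.le_one_of_edges_le hmn; omega
    omega
  · have := h.eight_le_edges_of_three_le le_rfl; omega
  · nlinarith

theorem le_edwards (h : DecodableCounts b n m) :
    (b : ℝ) ≤ (m : ℝ) / 2 - (√(8 * m + 1) - 1) / 8 := by
  suffices ∃ t : ℝ, 1 ≤ t ∧ t ^ 2 ≤ 8 * m + 1 ∧ (b : ℝ) ≤ ((t - 1) / 4) ^ 2 by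
    obtain ⟨t, ht, htm, hbt⟩ := this
    exact hbt.trans (sq_le_edwards ht htm)
  rcases (by omega : b ≤ 1 ∨ b = 2 ∨ b = 3 ∨ 4 ≤ b) with hb | rfl | rfl | hb
  · have : (3 : ℝ) ≤ m := by exact_mod_cast h.three_le_card.trans h.card_le_edges
    refine ⟨5, by norm_num, by linarith, ?_⟩
    norm_num
    exact_mod_cast hb
  · have : (6 : ℝ) ≤ m := by exact_mod_cast h.six_le_edges_of_two_le le_rfl
    exact ⟨7, by norm_num, by linarith, by norm_num⟩
  · have : (8 : ℝ) ≤ m := by exact_mod_cast h.eight_le_edges_of_three_le le_rfl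
    exact ⟨8, by norm_num, by linarith, by norm_num⟩
  · have hbm : b * (b + 1) ≤ 2 * m := (Nat.mul_le_mul_left b h.lt_card).trans
      (by rw [mul_comm]; exact h.card_mul_le)
    have hbm' : (b : ℝ) * (b + 1) ≤ 2 * m := by exact_mod_cast hbm
    have hb' : (4 : ℝ) ≤ b := by exact_mod_cast hb
    exact ⟨2 * b + 1, by linarith, by nlinarith, by nlinarith⟩

end DecodableCounts

theorem OddDecodable.decodableCounts {V : Type*} [Fintype V] [Nonempty V] {G : SimpleGraph V}
    (hG : OddDecodable G) :
    DecodableCounts (bCut G) (Fintype.card V) (Nat.card G.edgeSet) where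
  lt_card := SimpleGraph.bCut_lt_card
  card_mul_le := SimpleGraph.card_mul_bCut_le
  card_le_edges := SimpleGraph.card_le_card_edgeSet_of_oddDecodable hG
  edges_le_choose := SimpleGraph.card_edgeSet_le_choose_two
  le_one_of_edges_le := SimpleGraph.bCut_le_one_of_card_edgeSet_le hG
  le_two_of_card_eq_four := SimpleGraph.bCut_le_two_of_card_eq_four
  le_one_of_card_eq_four := SimpleGraph.bCut_le_one_of_card_eq_four

/-- For a decodable (`q` odd sense) simple graph `G` on a finite
nonempty vertex set with `n` vertices and `m` edges:
(1) `b_G ≤ m/2 − (√(8m+1) − 1)/8`, and (2) if `G` is connected,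
`b_G ≤ m/2 − (n−1)/4` (over the reals). -/
theorem bCut_real_upper_bounds {V : Type*} [Fintype V] [Nonempty V] (G : SimpleGraph V)
    (n m : ℕ) (hn : Fintype.card V = n) (hm : Nat.card G.edgeSet = m)
    (hdec : OddDecodable G) :
    (bCut G : ℝ) ≤ (m : ℝ) / 2 - (Real.sqrt (8 * m + 1) - 1) / 8 ∧
      (G.Connected → (bCut G : ℝ) ≤ (m : ℝ) / 2 - ((n : ℝ) - 1) / 4) := by
  have h := hdec.decodableCounts
  rw [hn, hm] at h
  refine ⟨h.le_edwards, fun _ => ?_⟩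
  have : (4 * bCut G + n : ℝ) ≤ 2 * m + 1 := by exact_mod_cast h.four_mul_add_le
  linarith
end

section
/- Let r ≥ 2 and n ≥ 4 be integers, and let f : Fin (rn) → Sym2 V be a multigraph on a finite vertex set V with |V| = n that is decodable (q odd sense) and whose minimum incidence degree δ_I equals 2r. Then u_{2r} ≥ n, i.e., there are at least n subsets of 2r edges whose deletion yields an undecodable sub-multigraph. -/
/-- The underlying simple graph of the sub-multigraph of `f : ι → Sym2 V` on the
edge-index set `S`. -/
def mGraph {V ι : Type*} (f : ι → Sym2 V) (S : Set ι) : SimpleGraph V :=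
  SimpleGraph.fromRel (fun a b => ∃ i ∈ S, f i = s(a, b))

/-- Decodability (over `GF(q)` with `q` odd): every connected component of the underlying
simple graph contains a vertex carrying a loop or contains an odd cycle (i.e. is not
2-colorable). -/
def DecodOdd {V ι : Type*} (f : ι → Sym2 V) (S : Set ι) : Prop :=
  ∀ c : (mGraph f S).ConnectedComponent,
    (∃ w ∈ c.supp, ∃ i ∈ S, f i = s(w, w)) ∨ ¬ ((mGraph f S).induce c.supp).Colorable 2

/-- `uCountOdd f x` is the number of `x`-element subsets `D` of the edge-index set whose
deletion leaves an undecodable (`q` odd sense) sub-multigraph. -/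
noncomputable def uCountOdd {V ι : Type*} [Fintype ι] (f : ι → Sym2 V) (x : ℕ) : ℕ :=
  Nat.card {D : Finset ι // D.card = x ∧ ¬ DecodOdd f ((↑D : Set ι)ᶜ)}

/-- The incidence degree of a vertex `v`: the number of edge indices `i` with `v ∈ f i`
(a loop at `v` contributes one). -/
noncomputable def incDeg {V ι : Type*} (f : ι → Sym2 V) (v : V) : ℕ :=
  Nat.card {i : ι // v ∈ f i}

/-!
Double counting incidences gives `∑ v, d_I(v) ≤ 2 · rn = n · 2r`, so `δ_I = 2r` forces every
vertex to have incidence degree exactly `2r`. Deleting the `2r` edges at a vertex `v` isolates `v`,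
which is then an undecodable loopless component. Distinct vertices give distinct edge sets: if
`u ≠ v` had the same incident edges, `{u, v}` would be a loopless bipartite component of `f`.
-/

open Finset SimpleGraph

lemma SimpleGraph.ConnectedComponent.supp_subset_of_forall_adj {V : Type*} {G : SimpleGraph V}
    {T : Set V} {v : V} (hv : v ∈ T) (hT : ∀ x ∈ T, ∀ y, G.Adj x y → y ∈ T) :
    (G.connectedComponentMk v).supp ⊆ T := by
  have walk_mem : ∀ {a b : V} (p : G.Walk a b), a ∈ T → b ∈ T := by
    intro a b p
    induction p with
    | nil => exact id
    | cons h _ ih => exact fun ha => ih (hT _ ha _ h)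
  intro w hw
  obtain ⟨p⟩ := (ConnectedComponent.eq.mp hw).symm
  exact walk_mem p hv

section Multigraph

variable {V ι : Type*} (f : ι → Sym2 V)

lemma mGraph_adj {S : Set ι} {a b : V} :
    (mGraph f S).Adj a b ↔ a ≠ b ∧ ∃ i ∈ S, f i = s(a, b) := by
  simp only [mGraph, fromRel_adj, Sym2.eq_swap (a := b), or_self]

/-- A component on at most two vertices is 2-colourable. -/
lemma not_decodOdd_of_supp_subset_pair {S : Set ι} {c : (mGraph f S).ConnectedComponent}
    {u v : V} (hc : c.supp ⊆ {u, v}) (hloop : ∀ w ∈ c.supp, ∀ i ∈ S, f i ≠ s(w, w)) :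
    ¬ DecodOdd f S := by
  classical
  intro hdec
  rcases hdec c with ⟨w, hw, i, hi, hfi⟩ | hcol
  · exact hloop w hw i hi hfi
  refine hcol ⟨Coloring.mk (fun x => if (x : V) = u then 0 else 1) fun {x y} hxy => ?_⟩
  have hne : (x : V) ≠ y := (show (mGraph f S).Adj x y from hxy).ne
  have hx := hc x.2
  have hy := hc y.2
  simp only [Set.mem_insert_iff, Set.mem_singleton_iff] at hx hy
  rcases hx with hx | hx <;> rcases hy with hy | hy <;> simp_all [eq_comm]

variable [Fintype ι] [DecidableEq V]

def incEdges (v : V) : Finset ι := {i | v ∈ f i}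

@[simp]
lemma mem_incEdges {v : V} {i : ι} : i ∈ incEdges f v ↔ v ∈ f i := by
  simp [incEdges]

lemma card_incEdges (v : V) : #(incEdges f v) = incDeg f v := by
  rw [incDeg, Nat.card_eq_fintype_card, Fintype.card_subtype, incEdges]

lemma sum_incDeg_le [Fintype V] : ∑ v, incDeg f v ≤ 2 * Fintype.card ι := by
  calc ∑ v, incDeg f v = ∑ i, #{v | v ∈ f i} := by
        simp only [← card_incEdges]
        exact sum_card_bipartiteAbove_eq_sum_card_bipartiteBelow (fun v i => v ∈ f i)
    _ ≤ ∑ _i : ι, 2 := sum_le_sum fun i _ =>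
        calc #{v | v ∈ f i} ≤ #(f i).toFinset := card_le_card fun v => by simp
          _ ≤ 2 := (Multiset.toFinset_card_le _).trans_eq (Sym2.card_toMultiset _)
    _ = 2 * Fintype.card ι := by rw [sum_const, card_univ, smul_eq_mul, mul_comm]

lemma incDeg_eq_of_forall_le [Fintype V] {k : ℕ} (hk : ∀ v, k ≤ incDeg f v)
    (hm : 2 * Fintype.card ι ≤ Fintype.card V * k) (v : V) : incDeg f v = k := by
  have hsum : ∑ _v : V, k = ∑ v, incDeg f v := by
    refine le_antisymm (sum_le_sum fun v _ => hk v) ?_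
    rw [sum_const, card_univ, smul_eq_mul]
    exact (sum_incDeg_le f).trans hm
  exact ((sum_eq_sum_iff_of_le fun v _ => hk v).mp hsum v (mem_univ v)).symm

lemma not_decodOdd_compl_incEdges (v : V) : ¬ DecodOdd f (↑(incEdges f v))ᶜ := by
  have hS : ∀ {i}, i ∈ (↑(incEdges f v) : Set ι)ᶜ → v ∉ f i := by simp
  have hc : ((mGraph f (↑(incEdges f v))ᶜ).connectedComponentMk v).supp ⊆ {v, v} := by
    rw [Set.pair_eq_singleton]
    refine ConnectedComponent.supp_subset_of_forall_adj rfl fun x hx y hxy => ?_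
    obtain ⟨-, i, hi, hfi⟩ := (mGraph_adj f).mp hxy
    exact absurd (hx ▸ hfi ▸ Sym2.mem_mk_left x y) (hS hi)
  refine not_decodOdd_of_supp_subset_pair f hc fun w hw i hi hfi => hS hi ?_
  obtain rfl : w = v := by simpa using hc hw
  exact hfi ▸ Sym2.mem_mk_left w w

lemma incEdges_injective (hdec : DecodOdd f Set.univ) : Function.Injective (incEdges f) := by
  intro u v huv
  by_contra hne
  have hpair : ∀ i, ∀ x ∈ ({u, v} : Set V), x ∈ f i → f i = s(u, v) := by
    intro i x hx hxi
    have hu : u ∈ f i ↔ v ∈ f i := by rw [← mem_incEdges, ← mem_incEdges, huv]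
    rw [← Sym2.mem_and_mem_iff hne]
    rcases hx with rfl | rfl
    · exact ⟨hxi, hu.mp hxi⟩
    · exact ⟨hu.mpr hxi, hxi⟩
  have hc : ((mGraph f Set.univ).connectedComponentMk u).supp ⊆ {u, v} := by
    refine ConnectedComponent.supp_subset_of_forall_adj (by simp) fun x hx y hxy => ?_
    obtain ⟨-, i, -, hfi⟩ := (mGraph_adj f).mp hxy
    have hfi_pair : f i = s(u, v) := hpair i x hx (hfi ▸ Sym2.mem_mk_left x y)
    have hy : y ∈ s(u, v) := hfi_pair ▸ hfi ▸ Sym2.mem_mk_right x y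
    simpa using hy
  refine not_decodOdd_of_supp_subset_pair f hc (fun w hw i _ hfi => hne ?_) hdec
  have hdiag : (f i).IsDiag := hfi ▸ Sym2.mk_isDiag_iff.mpr rfl
  rwa [hpair i w (hc hw) (hfi ▸ Sym2.mem_mk_left w w), Sym2.mk_isDiag_iff] at hdiag

end Multigraph

theorem uCountOdd_two_r_lower_bound_general {V : Type*} [Fintype V] {r n : ℕ}
    (hV : Fintype.card V = n)
    (f : Fin (r * n) → Sym2 V) (hdec : DecodOdd f Set.univ)
    (hδ : (⨅ v : V, incDeg f v) = 2 * r) :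
    n ≤ uCountOdd f (2 * r) := by
  classical
  have hregular : ∀ v, incDeg f v = 2 * r := by
    refine incDeg_eq_of_forall_le f (fun v => hδ ▸ ciInf_le (OrderBot.bddBelow _) v) ?_
    rw [Fintype.card_fin, hV]
    exact (by ring : 2 * (r * n) = n * (2 * r)).le
  let star : V →
      {D : Finset (Fin (r * n)) // D.card = 2 * r ∧ ¬ DecodOdd f ((↑D : Set _)ᶜ)} :=
    fun v => ⟨incEdges f v, (card_incEdges f v).trans (hregular v),
      not_decodOdd_compl_incEdges f v⟩
  calc n = Nat.card V := by rw [Nat.card_eq_fintype_card, hV]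
    _ ≤ uCountOdd f (2 * r) :=
      Nat.card_le_card_of_injective star fun u v h =>
        incEdges_injective f hdec (congrArg Subtype.val h)

/-- Let `r ≥ 2` and `n ≥ 4`, and let `f` be a decodable (`q` odd sense)
multigraph with `rn` edges on `n` vertices whose minimum incidence degree equals `2r`.
Then `u_{2r} ≥ n`: at least `n` subsets of `2r` edges have undecodable complement. -/
theorem uCountOdd_two_r_lower_bound {V : Type*} [Fintype V] {r n : ℕ}
    (hr : 2 ≤ r) (hn : 4 ≤ n) (hV : Fintype.card V = n)
    (f : Fin (r * n) → Sym2 V) (hdec : DecodOdd f Set.univ)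
    (hδ : (⨅ v : V, incDeg f v) = 2 * r) :
    n ≤ uCountOdd f (2 * r) :=
  uCountOdd_two_r_lower_bound_general hV f hdec hδ
end

section
/- Let n and r be integers with r ≥ 2 and n/2 < 4r < n, and let G be the circulant graph C_n(1,…,r) on vertex set ZMod n (so G is 2r-regular with m = rn edges). Then, with decodability in the q-odd sense: the minimum degree of G is 2r, b_G = 2r, and u_{2r} = n; that is, the minimum number of edges whose deletion yields an undecodable spanning subgraph is exactly 2r, and there are exactly n such 2r-element edge sets (namely, for each vertex, the set of 2r edges incident with it). -/
/-- The circulant graph `C_n(1, …, r)` on `ZMod n`: distinct `i` and `j` are adjacent iff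
`i − j ≡ ±k (mod n)` for some `1 ≤ k ≤ r`. -/
def circulant (n r : ℕ) : SimpleGraph (ZMod n) :=
  SimpleGraph.fromRel (fun i j => ∃ k : ℕ, 1 ≤ k ∧ k ≤ r ∧ i - j = (k : ZMod n))

/-!
Let `D` be a set of at most `2r` edges. Each edge lies in at most two of the triangles
`i, i + 1, i + 2`, and `4r < n`, so some triangle survives in `G − D`. If `G − D` is not
decodable, a bipartite component therefore has a vertex set `S` with `∅ ≠ S ≠ V`, and every edge
of `G` leaving `S` is in `D`. The edges of length `k` leaving `S` correspond to the set
`S.crossSet k` of `i` for which exactly one of `i, i + k` is in `S`; it has even size, and it is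
empty exactly when `k` is a period of `S`. The nonempty set `S.exitSet 1` is invariant under the
periods of `S`; if `p` of them lie in `[1, r]`, it contains some `a` together with all `a ± k`
for these periods `k`, so the cut has at least `2(2p + 1) + 2(r - 1 - p) = 2r + 2p` edges. Hence
`#D ≥ 2r`, and in case of equality `S` has no period and `#(S.crossSet 1) = 2`,
`#(S.crossSet 2) = 2`; this forces `S` or its complement to be a single vertex `v`, i.e. `D` is
the set of edges at `v`.
-/

open Finset Function
open scoped symmDiff

namespace Finset

variable {G : Type*} [AddCommGroup G] [DecidableEq G]

def exitSet (S : Finset G) (k : G) : Finset G :=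
  S.filter fun i => i + k ∉ S

@[simp]
lemma mem_exitSet {S : Finset G} {k i : G} : i ∈ S.exitSet k ↔ i ∈ S ∧ i + k ∉ S := by
  simp [exitSet]

lemma periodic_exitSet {S : Finset G} {k p : G} (hp : Periodic (· ∈ S) p) :
    Periodic (· ∈ S.exitSet k) p := by
  intro i
  simp only [mem_exitSet, add_right_comm i p k, hp i, hp (i + k)]

variable [Fintype G]

def crossSet (S : Finset G) (k : G) : Finset G :=
  univ.filter fun i => ¬(i ∈ S ↔ i + k ∈ S)

variable {S T : Finset G} {k l i : G}

@[simp]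
lemma mem_crossSet : i ∈ S.crossSet k ↔ ¬(i ∈ S ↔ i + k ∈ S) := by
  simp [crossSet]

lemma crossSet_eq_empty_iff : S.crossSet k = ∅ ↔ Periodic (· ∈ S) k := by
  simp [eq_empty_iff_forall_notMem, Periodic, iff_comm]

lemma card_crossSet : #(S.crossSet k) = 2 * #(S.exitSet k) := by
  set T := univ.filter fun i => i + k ∈ S
  have hT : #T = #S := card_nbij' (· + k) (· - k) (by intro i; simp [T]) (by intro i; simp [T])
    (by intro i _; simp) (by intro i _; simp)
  have hexit : S.exitSet k = S \ T := by ext i; simp [T]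
  have hcross : S.crossSet k = S \ T ∪ T \ S := by ext i; simp [T]; tauto
  rw [hcross, card_union_of_disjoint disjoint_sdiff_sdiff, hexit, card_sdiff_comm hT.symm]
  ring

lemma crossSet_symmDiff : (S ∆ T).crossSet k = S.crossSet k ∆ T.crossSet k := by
  ext i; simp [mem_symmDiff]; tauto

lemma crossSet_singleton (v : G) (hk : k ≠ 0) : ({v} : Finset G).crossSet k = {v, v - k} := by
  ext i
  simp only [mem_crossSet, mem_singleton, mem_insert, ← eq_sub_iff_add_eq]
  constructor
  · tauto
  · rintro (rfl | rfl) <;> simp [hk, eq_sub_iff_add_eq]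

lemma mem_crossSet_add : i ∈ S.crossSet (k + l) ↔ ¬(i ∈ S.crossSet k ↔ i + k ∈ S.crossSet l) := by
  simp only [mem_crossSet, add_assoc]; tauto

end Finset

namespace ZMod

variable {n r : ℕ}

lemma natCast_ne_zero_of_lt {k : ℕ} (hk : 0 < k) (h : k < n) : (k : ZMod n) ≠ 0 := by
  rw [Ne, natCast_eq_zero_iff]
  exact fun hdvd => (Nat.le_of_dvd hk hdvd).not_gt h

lemma eq_of_natCast_eq {a b : ℕ} (ha : a < n) (hb : b < n) (hab : (a : ZMod n) = b) : a = b := by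
  simpa [Nat.mod_eq_of_lt ha, Nat.mod_eq_of_lt hb] using (natCast_eq_natCast_iff' a b n).1 hab

lemma eq_of_intCast_eq (h : 2 * r < n) {a b : ℤ} (ha : |a| ≤ r) (hb : |b| ≤ r)
    (hab : (a : ZMod n) = b) : a = b := by
  have hdvd := (intCast_eq_intCast_iff_dvd_sub a b n).1 hab
  rw [abs_le] at ha hb
  have := Int.eq_zero_of_abs_lt_dvd hdvd (abs_lt.2 ⟨by omega, by omega⟩)
  omega

lemma eq_and_eq_of_mk_add_eq (h : 2 * r < n) {i j : ZMod n} {k l : ℕ} (hk : k ∈ Icc 1 r)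
    (hl : l ∈ Icc 1 r) (he : s(i, i + k) = s(j, j + l)) : i = j ∧ k = l := by
  rw [mem_Icc] at hk hl
  rcases Sym2.eq_iff.1 he with ⟨rfl, he⟩ | ⟨rfl, he⟩
  · exact ⟨rfl, eq_of_natCast_eq (n := n) (by omega) (by omega) (add_left_cancel he)⟩
  · refine absurd ?_ (natCast_ne_zero_of_lt (k := k + l) (n := n) (by omega) (by omega))
    push_cast
    linear_combination he

lemma two_mul_card_add_one_le_card_of_periodic (h : 2 * r < n) {A : Finset (ZMod n)}
    (hA : A.Nonempty) {P : Finset ℕ} (hP : P ⊆ Icc 1 r)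
    (hper : ∀ p ∈ P, Periodic (· ∈ A) (p : ZMod n)) : 2 * #P + 1 ≤ #A := by
  obtain ⟨a, ha⟩ := hA
  have hPr : ∀ p ∈ P, 1 ≤ p ∧ p ≤ r := fun p hp => mem_Icc.1 (hP hp)
  set Z : Finset ℤ := insert 0 (P.image (↑) ∪ P.image fun p : ℕ => -(p : ℤ))
  have hZ : ∀ m ∈ Z, |m| ≤ r := by
    simp only [Z, mem_insert, mem_union, mem_image]
    rintro m (rfl | ⟨p, hp, rfl⟩ | ⟨p, hp, rfl⟩)
    · simp
    all_goals simp [(hPr p hp).2]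
  have hcard : #Z = 2 * #P + 1 := by
    rw [card_insert_of_notMem, card_union_of_disjoint, card_image_of_injective _ Nat.cast_injective,
      card_image_of_injective _ fun p q hpq => by simpa using hpq]
    · ring
    · simp only [disjoint_left, mem_image]
      rintro _ ⟨p, -, rfl⟩ ⟨q, hq, hpq⟩
      have := (hPr q hq).1
      omega
    · simp only [mem_union, mem_image, not_or, not_exists, not_and]
      exact ⟨fun p hp => by have := (hPr p hp).1; omega, fun p hp => by have := (hPr p hp).1; omega⟩
  rw [← hcard]
  refine card_le_card_of_injOn (fun m => a + (m : ZMod n)) ?_ ?_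
  · intro m hm
    simp only [Z, mem_coe, mem_insert, mem_union, mem_image] at hm
    rcases hm with rfl | ⟨p, hp, rfl⟩ | ⟨p, hp, rfl⟩
    · simpa using ha
    · simpa [(hper p hp) a] using ha
    · simpa [(hper p hp).neg a] using ha
  · intro m₁ hm₁ m₂ hm₂ heq
    exact eq_of_intCast_eq h (hZ m₁ hm₁) (hZ m₂ hm₂) (add_left_cancel heq)

end ZMod

namespace Finset

variable {n r : ℕ} [NeZero n] {S : Finset (ZMod n)}

lemma eq_empty_or_eq_univ_of_periodic_one (h : Periodic (· ∈ S) (1 : ZMod n)) :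
    S = ∅ ∨ S = univ := by
  have hconst : ∀ x, x ∈ S ↔ (0 : ZMod n) ∈ S := fun x => by
    simpa [ZMod.natCast_zmod_val] using (h.nat_mul_eq x.val).to_iff
  by_cases h0 : (0 : ZMod n) ∈ S
  · exact Or.inr (eq_univ_iff_forall.2 fun x => (hconst x).2 h0)
  · exact Or.inl (eq_empty_iff_forall_notMem.2 fun x hx => h0 ((hconst x).1 hx))

lemma card_crossSet_add_le_sum {k₀ : ℕ} (hk₀ : k₀ ∈ Icc 1 r) (P : Finset ℕ)
    (hP : ∀ k ∈ Icc 1 r, k ∉ P → (S.crossSet k).Nonempty) :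
    #(S.crossSet k₀) + 2 * (r - 1 - #P) ≤ ∑ k ∈ Icc 1 r, #(S.crossSet k) := by
  rw [← add_sum_erase _ _ hk₀]
  gcongr
  calc 2 * (r - 1 - #P) ≤ 2 * #(((Icc 1 r).erase k₀) \ P) := by
        have := le_card_sdiff P ((Icc 1 r).erase k₀)
        rw [card_erase_of_mem hk₀, Nat.card_Icc] at this
        omega
    _ = ∑ k ∈ ((Icc 1 r).erase k₀) \ P, 2 := by rw [sum_const, smul_eq_mul, mul_comm]
    _ ≤ ∑ k ∈ ((Icc 1 r).erase k₀) \ P, #(S.crossSet k) := by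
        refine sum_le_sum fun k hk => ?_
        obtain ⟨hk, hkP⟩ := mem_sdiff.1 hk
        have := card_crossSet (S := S) (k := (k : ZMod n))
        have := (hP k (mem_of_mem_erase hk) hkP).card_pos
        omega
    _ ≤ ∑ k ∈ (Icc 1 r).erase k₀, #(S.crossSet k) := sum_le_sum_of_subset sdiff_subset

lemma exists_eq_singleton_or_compl_of_card_crossSet (hn : 2 < n) (h₁ : #(S.crossSet 1) = 2)
    (h₂ : #(S.crossSet 2) < 4) : ∃ v, S = {v} ∨ S = {v}ᶜ := by
  have : Fact (1 < n) := ⟨by omega⟩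
  have key : ∀ a b, S.crossSet 1 = {a, b} → b ≠ a + 1 → a ≠ b + 1 →
      a ∈ S.crossSet 2 ∧ a - 1 ∈ S.crossSet 2 := by
    intro a b hX hb ha
    simp only [← one_add_one_eq_two, mem_crossSet_add, hX, mem_insert, mem_singleton]
    simp [sub_eq_iff_eq_add, hb.symm, ha]
  obtain ⟨v, hv⟩ : ∃ v, S.crossSet 1 = {v, v - 1} := by
    obtain ⟨a, b, hab, hX⟩ := card_eq_two.1 h₁
    by_cases hb : b = a + 1
    · exact ⟨b, by rw [hX, hb, pair_comm]; simp⟩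
    by_cases ha : a = b + 1
    · exact ⟨a, by rw [hX, ha]; simp⟩
    obtain ⟨haS, haS'⟩ := key a b hX hb ha
    obtain ⟨hbS, hbS'⟩ := key b a (by rw [hX, pair_comm]) ha hb
    have hsub : {a, a - 1, b, b - 1} ⊆ S.crossSet 2 := by
      simp [insert_subset_iff, haS, haS', hbS, hbS']
    have hcard : #{a, a - 1, b, b - 1} = 4 := by
      rw [card_insert_of_notMem, card_insert_of_notMem, card_pair]
      all_goals simp [sub_eq_iff_eq_add, eq_sub_iff_add_eq, hab, Ne.symm hb, ha]
    exact absurd (hcard ▸ card_le_card hsub) (by omega)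
  have hper : Periodic (· ∈ S ∆ {v}) (1 : ZMod n) := by
    rw [← crossSet_eq_empty_iff, crossSet_symmDiff, hv, crossSet_singleton v one_ne_zero,
      symmDiff_self, bot_eq_empty]
  refine ⟨v, (eq_empty_or_eq_univ_of_periodic_one hper).imp symmDiff_eq_bot.1 fun h => ?_⟩
  calc S = S ∆ {v} ∆ {v} := (symmDiff_symmDiff_cancel_right _ _).symm
    _ = {v}ᶜ := by rw [h]; ext; simp [mem_symmDiff]

theorem exists_eq_singleton_or_compl_of_sum_card_crossSet_lt (hr : 2 ≤ r) (h : 2 * r < n)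
    (hS : S.Nonempty) (hS' : S ≠ univ) (hsum : ∑ k ∈ Icc 1 r, #(S.crossSet k) < 2 * r + 2) :
    ∃ v, S = {v} ∨ S = {v}ᶜ := by
  set P := (Icc 1 r).filter fun k : ℕ => S.crossSet k = ∅
  have hP : ∀ k ∈ Icc 1 r, k ∉ P → (S.crossSet k).Nonempty := fun k hk hkP =>
    nonempty_iff_ne_empty.2 fun h => hkP (mem_filter.2 ⟨hk, h⟩)
  have hexit : (S.exitSet 1).Nonempty := by
    by_contra hempty
    have h₀ : S.crossSet 1 = ∅ := by
      rw [← card_eq_zero, card_crossSet, not_nonempty_iff_eq_empty.1 hempty, card_empty]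
    rcases eq_empty_or_eq_univ_of_periodic_one (crossSet_eq_empty_iff.1 h₀) with rfl | rfl
    exacts [not_nonempty_empty hS, hS' rfl]
  have hexit_card : 2 * #P + 1 ≤ #(S.exitSet 1) := by
    refine ZMod.two_mul_card_add_one_le_card_of_periodic h hexit (filter_subset _ _) fun p hp => ?_
    exact periodic_exitSet (crossSet_eq_empty_iff.1 (mem_filter.1 hp).2)
  have h₁ := card_crossSet_add_le_sum (S := S) (k₀ := 1) (by simp; omega) P hP
  have h₂ := card_crossSet_add_le_sum (S := S) (k₀ := 2) (by simp; omega) P hP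
  have heven := card_crossSet (S := S) (k := 1)
  push_cast at h₁ h₂
  -- `h₁` and `hexit_card` force `P = ∅` and `#(S.crossSet 1) = 2`; then `h₂` bounds `crossSet 2`
  exact exists_eq_singleton_or_compl_of_card_crossSet (by omega) (by omega) (by omega)

end Finset

namespace SimpleGraph

variable {V : Type*} {G H : SimpleGraph V}

lemma ConnectedComponent.mem_of_adj_of_mem_supp {D : Set (Sym2 V)}
    {c : (G.deleteEdges D).ConnectedComponent} {a b : V} (ha : a ∈ c.supp) (hb : b ∉ c.supp)
    (hab : G.Adj a b) : s(a, b) ∈ D := by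
  by_contra hD
  rw [mem_supp_iff] at ha hb
  exact hb (ha ▸ (ConnectedComponent.connectedComponentMk_eq_of_adj
    ((deleteEdges_adj ..).2 ⟨hab, hD⟩)).symm)

lemma not_colorable_two_induce_supp_of_adj {x y z : V} (hxy : H.Adj x y) (hyz : H.Adj y z)
    (hxz : H.Adj x z) : ¬(H.induce (H.connectedComponentMk x).supp).Colorable 2 := by
  classical
  intro hc
  have hy : y ∈ (H.connectedComponentMk x).supp :=
    (ConnectedComponent.connectedComponentMk_eq_of_adj hxy).symm
  have hz : z ∈ (H.connectedComponentMk x).supp :=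
    (ConnectedComponent.connectedComponentMk_eq_of_adj hxz).symm
  exact hc.cliqueFree (by norm_num : 2 < 3) {⟨x, rfl⟩, ⟨y, hy⟩, ⟨z, hz⟩}
    (is3Clique_triple_iff.2 ⟨by simpa, by simpa, by simpa⟩)

lemma not_oddDecodable_of_forall_not_adj {v : V} (hv : ∀ w, ¬H.Adj v w) : ¬OddDecodable H := by
  have hsupp : ∀ u ∈ (H.connectedComponentMk v).supp, u = v := by
    intro u hu
    obtain ⟨p⟩ := (ConnectedComponent.exact hu).symm
    cases p with
    | nil => rfl
    | cons h _ => exact absurd h (hv _)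
  refine fun h => h (H.connectedComponentMk v) ⟨Coloring.mk (fun _ => 0) fun {a b} hab => ?_⟩
  exact absurd (Subtype.ext ((hsupp a a.2).trans (hsupp b b.2).symm)) hab.ne

lemma not_oddDecodable_deleteEdges_incidenceSet (v : V) :
    ¬OddDecodable (G.deleteEdges (G.incidenceSet v)) :=
  not_oddDecodable_of_forall_not_adj fun _ h =>
    ((deleteEdges_adj ..).1 h).2 (G.mk'_mem_incidenceSet_left_iff.2 ((deleteEdges_adj ..).1 h).1)

lemma eq_of_incidenceSet_eq {v w a b : V} (h : G.incidenceSet v = G.incidenceSet w)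
    (ha : G.Adj v a) (hb : G.Adj v b) (hab : a ≠ b) : v = w := by
  by_contra hvw
  have hsub := G.incidenceSet_inter_incidenceSet_subset hvw
  rw [← h, Set.inter_self] at hsub
  have ha' := Sym2.congr_right.1 (hsub (G.mk'_mem_incidenceSet_left_iff.2 ha))
  have hb' := Sym2.congr_right.1 (hsub (G.mk'_mem_incidenceSet_left_iff.2 hb))
  exact hab (ha'.trans hb'.symm)

end SimpleGraph

section Circulant

open SimpleGraph

variable {n r : ℕ}

lemma circulant_adj_iff (h : r < n) {i j : ZMod n} :
    (circulant n r).Adj i j ↔ ∃ k ∈ Icc 1 r, j = i + k ∨ i = j + k := by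
  simp only [circulant, fromRel_adj, mem_Icc, sub_eq_iff_eq_add]
  constructor
  · rintro ⟨-, ⟨k, h1, h2, hk⟩ | ⟨k, h1, h2, hk⟩⟩
    exacts [⟨k, ⟨h1, h2⟩, Or.inr (hk.trans (add_comm _ _))⟩,
      ⟨k, ⟨h1, h2⟩, Or.inl (hk.trans (add_comm _ _))⟩]
  · rintro ⟨k, ⟨h1, h2⟩, hk | hk⟩
    all_goals
      have hk0 : (k : ZMod n) ≠ 0 := ZMod.natCast_ne_zero_of_lt (by omega) (by omega)
      refine ⟨fun hij => hk0 (by simpa [hij] using hk), ?_⟩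
    exacts [Or.inr ⟨k, h1, h2, hk.trans (add_comm _ _)⟩,
      Or.inl ⟨k, h1, h2, hk.trans (add_comm _ _)⟩]

lemma circulant_adj_add (h : r < n) {k : ℕ} (hk : k ∈ Icc 1 r) (i : ZMod n) :
    (circulant n r).Adj i (i + k) :=
  (circulant_adj_iff h).2 ⟨k, hk, Or.inl rfl⟩

lemma circulant_degree (h : 2 * r < n) (v : ZMod n) [Fintype ((circulant n r).neighborSet v)] :
    (circulant n r).degree v = 2 * r := by
  classical
  have hnbr : (circulant n r).neighborFinset v =
      (Icc 1 r).image (fun k : ℕ => v + k) ∪ (Icc 1 r).image (fun k : ℕ => v - k) := by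
    ext w
    simp only [mem_neighborFinset, circulant_adj_iff (by omega : r < n), mem_union,
      mem_image]
    grind
  rw [← card_neighborFinset_eq_degree, hnbr, card_union_of_disjoint,
    card_image_of_injOn, card_image_of_injOn, Nat.card_Icc]
  · omega
  all_goals simp only [Set.InjOn, coe_Icc, Set.mem_Icc, Finset.disjoint_left, mem_image, mem_Icc]
  · intro a ha b hb hab
    exact ZMod.eq_of_natCast_eq (n := n) (by omega) (by omega) (by simpa using hab)
  · intro a ha b hb hab
    exact ZMod.eq_of_natCast_eq (n := n) (by omega) (by omega) (by simpa using hab)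
  · rintro _ ⟨a, ha, rfl⟩ ⟨b, hb, hab⟩
    refine ZMod.natCast_ne_zero_of_lt (k := a + b) (n := n) (by omega) (by omega) ?_
    push_cast
    linear_combination -hab

lemma circulant_exists_eq_mk_add (h : r < n) {e : Sym2 (ZMod n)}
    (he : e ∈ (circulant n r).edgeSet) : ∃ i : ZMod n, ∃ k ∈ Icc 1 r, e = s(i, i + k) := by
  induction e using Sym2.inductionOn with
  | hf x y =>
    rw [mem_edgeSet] at he
    obtain ⟨k, hk, rfl | rfl⟩ := (circulant_adj_iff h).1 he
    exacts [⟨x, k, hk, rfl⟩, ⟨y, k, hk, Sym2.eq_swap⟩]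

lemma circulant_sum_card_crossSet_le_card [NeZero n] (h : 2 * r < n) {S : Finset (ZMod n)}
    {D : Finset (Sym2 (ZMod n))} (hD : ∀ a ∈ S, ∀ b ∉ S, (circulant n r).Adj a b → s(a, b) ∈ D) :
    ∑ k ∈ Icc 1 r, #(S.crossSet k) ≤ #D := by
  rw [← card_sigma]
  refine card_le_card_of_injOn (fun x => s(x.2, x.2 + x.1)) ?_ ?_
  · rintro ⟨k, i⟩ hki
    simp only [coe_sigma, Set.mem_sigma_iff, coe_Icc, Set.mem_Icc, mem_coe, mem_crossSet] at hki
    have hadj := circulant_adj_add (by omega) (mem_Icc.2 hki.1) i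
    by_cases hi : i ∈ S
    · exact hD _ hi _ (by tauto) hadj
    · show s(i, i + k) ∈ D
      rw [Sym2.eq_swap]
      exact hD _ (by tauto) _ hi hadj.symm
  · rintro ⟨k, i⟩ hki ⟨l, j⟩ hlj he
    simp only [coe_sigma, Set.mem_sigma_iff, mem_coe] at hki hlj
    obtain ⟨rfl, rfl⟩ := ZMod.eq_and_eq_of_mk_add_eq h hki.1 hlj.1 he
    rfl

lemma circulant_exists_triangle_deleteEdges (hr : 2 ≤ r) (h : 2 * r < n)
    {D : Finset (Sym2 (ZMod n))} (hD : ↑D ⊆ (circulant n r).edgeSet) (hcard : 2 * #D < n) :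
    ∃ x y z, ((circulant n r).deleteEdges ↑D).Adj x y ∧
      ((circulant n r).deleteEdges ↑D).Adj y z ∧ ((circulant n r).deleteEdges ↑D).Adj x z := by
  classical
  have : NeZero n := ⟨by omega⟩
  have h₁ : 1 ∈ Icc 1 r := mem_Icc.2 ⟨le_rfl, by omega⟩
  have h₂ : 2 ∈ Icc 1 r := mem_Icc.2 ⟨by omega, hr⟩
  -- the triangle `i, i + 1, i + 2` is hit by `e = s(j, j + k)` only if `i = j` or `i + 1 = j`
  set hits : Sym2 (ZMod n) → Finset (ZMod n) := fun e =>
    univ.filter fun i => e = s(i, i + 1) ∨ e = s(i + 1, i + 1 + 1) ∨ e = s(i, i + 2)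
  have hhits : ∀ e ∈ D, #(hits e) ≤ 2 := by
    intro e he
    obtain ⟨j, k, hk, rfl⟩ := circulant_exists_eq_mk_add (by omega) (hD he)
    refine (card_le_card fun i hi => ?_).trans (card_le_two (a := j) (b := j - 1))
    simp only [hits, mem_filter, mem_univ, true_and] at hi
    have key := fun l (hl : l ∈ Icc 1 r) (x : ZMod n) (he : s(j, j + k) = s(x, x + (l : ℕ))) =>
      (ZMod.eq_and_eq_of_mk_add_eq h hk hl he).1
    rcases hi with he | he | he
    · simp [key 1 h₁ i (by simpa using he)]
    · exact mem_insert_of_mem (mem_singleton.2 (by rw [key 1 h₁ (i + 1) (by simpa using he)]; ring))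
    · simp [key 2 h₂ i (by simpa using he)]
  obtain ⟨i, hi⟩ : ∃ i, i ∉ D.biUnion hits := by
    by_contra! hall
    have := card_biUnion_le.trans (sum_le_sum hhits)
    rw [sum_const, smul_eq_mul, eq_univ_iff_forall.2 hall, card_univ, ZMod.card] at this
    omega
  simp only [mem_biUnion, not_exists, not_and, hits, mem_filter, mem_univ, true_and] at hi
  refine ⟨i, i + 1, i + 2, ?_, ?_, ?_⟩ <;> rw [deleteEdges_adj]
  · exact ⟨by simpa using circulant_adj_add (by omega) h₁ i, fun he => hi _ he (by simp)⟩
  · have hadj := circulant_adj_add (by omega) h₁ (i + 1)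
    rw [Nat.cast_one, add_assoc, one_add_one_eq_two] at hadj
    exact ⟨hadj, fun he => hi _ he (by simp [add_assoc, one_add_one_eq_two])⟩
  · exact ⟨by simpa using circulant_adj_add (by omega) h₂ i, fun he => hi _ he (by simp)⟩

lemma circulant_exists_incidenceSet_subset (hr : 2 ≤ r) (h : 4 * r < n)
    {D : Finset (Sym2 (ZMod n))} (hD : ↑D ⊆ (circulant n r).edgeSet) (hcard : #D ≤ 2 * r)
    (hdec : ¬OddDecodable ((circulant n r).deleteEdges ↑D)) :
    ∃ v, (circulant n r).incidenceSet v ⊆ ↑D := by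
  classical
  have : NeZero n := ⟨by omega⟩
  obtain ⟨c, hc⟩ : ∃ c : ((circulant n r).deleteEdges ↑D).ConnectedComponent,
      (((circulant n r).deleteEdges ↑D).induce c.supp).Colorable 2 := by
    simpa [OddDecodable] using hdec
  set S := univ.filter (· ∈ c.supp)
  have hcross : ∀ a ∈ S, ∀ b ∉ S, (circulant n r).Adj a b → s(a, b) ∈ D := fun a ha b hb hab =>
    ConnectedComponent.mem_of_adj_of_mem_supp (by simpa [S] using ha) (by simpa [S] using hb) hab
  have hS : S ≠ univ := by
    obtain ⟨x, y, z, hxy, hyz, hxz⟩ :=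
      circulant_exists_triangle_deleteEdges hr (by omega) hD (by omega)
    intro hS
    have hx : x ∈ S := hS ▸ mem_univ x
    simp only [S, mem_filter, mem_univ, true_and] at hx
    exact not_colorable_two_induce_supp_of_adj hxy hyz hxz
      ((ConnectedComponent.mem_supp_iff _ _).1 hx ▸ hc)
  have hSne : S.Nonempty := by
    obtain ⟨v, hv⟩ := c.nonempty_supp
    exact ⟨v, by simpa [S] using hv⟩
  obtain ⟨v, hv⟩ := exists_eq_singleton_or_compl_of_sum_card_crossSet_lt hr (by omega) hSne hS
    ((circulant_sum_card_crossSet_le_card (by omega) hcross).trans_lt (by omega))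
  refine ⟨v, fun e ⟨he, hve⟩ => ?_⟩
  obtain ⟨w, rfl⟩ := Sym2.mem_iff_exists.1 hve
  have hvw : (circulant n r).Adj v w := he
  rcases hv with hv | hv
  · exact hcross v (by simp [hv]) w (by simp [hv, hvw.ne.symm]) hvw
  · rw [Sym2.eq_swap]
    exact hcross w (by simp [hv, hvw.ne.symm]) v (by simp [hv]) hvw.symm

lemma circulant_natCard_adj (h : 2 * r < n) (v : ZMod n) :
    Nat.card {w // (circulant n r).Adj v w} = 2 * r := by
  classical
  have : NeZero n := ⟨by omega⟩
  rw [← circulant_degree h v, ← card_neighborSet_eq_degree, ← Nat.card_eq_fintype_card]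
  rfl

lemma uG_circulant_of_lt (hr : 2 ≤ r) (h : 4 * r < n) {x : ℕ} (hx : x < 2 * r) :
    uG (circulant n r) x = 0 := by
  classical
  have : NeZero n := ⟨by omega⟩
  refine Nat.card_eq_zero.2 (Or.inl ⟨fun ⟨D, hD, hcard, hdec⟩ => ?_⟩)
  obtain ⟨v, hv⟩ := circulant_exists_incidenceSet_subset hr h hD (by omega) hdec
  have hle := card_le_card (s := (circulant n r).incidenceFinset v) (t := D)
    (by rwa [← coe_subset, coe_incidenceFinset])
  rw [card_incidenceFinset_eq_degree, circulant_degree (by omega)] at hle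
  omega

lemma uG_circulant_two_mul (hr : 2 ≤ r) (h : 4 * r < n) : uG (circulant n r) (2 * r) = n := by
  classical
  have : NeZero n := ⟨by omega⟩
  have hcard v : #((circulant n r).incidenceFinset v) = 2 * r := by
    rw [card_incidenceFinset_eq_degree, circulant_degree (by omega)]
  have hstar v : ↑((circulant n r).incidenceFinset v) ⊆ (circulant n r).edgeSet ∧
      #((circulant n r).incidenceFinset v) = 2 * r ∧
      ¬OddDecodable ((circulant n r).deleteEdges ↑((circulant n r).incidenceFinset v)) := by
    rw [coe_incidenceFinset]
    exact ⟨(circulant n r).incidenceSet_subset v, hcard v,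
      not_oddDecodable_deleteEdges_incidenceSet v⟩
  refine (Nat.card_eq_of_bijective (fun v => ⟨_, hstar v⟩)
    ⟨fun v w hvw => ?_, fun ⟨D, hD, hDcard, hdec⟩ => ?_⟩).symm.trans (Nat.card_zmod n)
  · have hinc : (circulant n r).incidenceSet v = (circulant n r).incidenceSet w := by
      have hfin := congrArg Subtype.val hvw
      dsimp only at hfin
      rw [← coe_incidenceFinset, ← coe_incidenceFinset, hfin]
    have hnext : (circulant n r).Adj v (v + 1) := by
      simpa using circulant_adj_add (k := 1) (by omega) (by simp; omega) v
    have hprev : (circulant n r).Adj v (v - 1) :=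
      (circulant_adj_iff (by omega)).2 ⟨1, by simp; omega, Or.inr (by simp)⟩
    refine eq_of_incidenceSet_eq hinc hnext hprev fun h1 => ?_
    refine ZMod.natCast_ne_zero_of_lt (k := 2) (n := n) (by omega) (by omega) ?_
    linear_combination h1
  · obtain ⟨v, hv⟩ := circulant_exists_incidenceSet_subset hr h hD hDcard.le hdec
    rw [← coe_incidenceFinset, coe_subset] at hv
    exact ⟨v, Subtype.ext (eq_of_subset_of_card_le hv (by rw [hDcard, hcard]))⟩

end Circulant

theorem circulant_minDegree_bCut_uCount_general (n r : ℕ) (hr : 2 ≤ r)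
    (h2 : 4 * r < n) :
    (⨅ v : ZMod n, Nat.card {w : ZMod n // (circulant n r).Adj v w}) = 2 * r ∧
      bCut (circulant n r) = 2 * r ∧ uG (circulant n r) (2 * r) = n := by
  have hcount := uG_circulant_two_mul hr h2
  refine ⟨?_, ?_, hcount⟩
  · have : NeZero n := ⟨by omega⟩
    simp_rw [circulant_natCard_adj (by omega : 2 * r < n)]
    exact ciInf_const
  · have hpos : 2 * r ∈ {x | 0 < uG (circulant n r) x} := by
      show 0 < uG (circulant n r) (2 * r)
      omega
    refine le_antisymm (Nat.sInf_le hpos) (le_csInf ⟨_, hpos⟩ fun x hx => not_lt.1 fun hlt => ?_)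
    simp [uG_circulant_of_lt hr h2 hlt] at hx

/-- For `r ≥ 2` and `n/2 < 4r < n`, the circulant graph
`G = C_n(1, …, r)` satisfies (with decodability in the `q` odd sense): the minimum degree
of `G` is `2r`, `b_G = 2r`, and `u_{2r} = n`. -/
theorem circulant_minDegree_bCut_uCount (n r : ℕ) (hr : 2 ≤ r)
    (h1 : n < 8 * r) (h2 : 4 * r < n) :
    (⨅ v : ZMod n, Nat.card {w : ZMod n // (circulant n r).Adj v w}) = 2 * r ∧
      bCut (circulant n r) = 2 * r ∧ uG (circulant n r) (2 * r) = n :=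
  circulant_minDegree_bCut_uCount_general n r hr h2
end

section
/- Let n ≥ 5 and r ≥ 2 be integers with 2r < n, and let G be the circulant graph C_n(1,…,r) on vertex set ZMod n. For each i ∈ ZMod n, the three pairs {i−1, i}, {i, i+1}, {i−1, i+1} are edges of G forming a triangle τ_i. If D is a set of edges of G with |D| ≤ ⌈n/2⌉ − 1, then at least one of the n triangles τ_i has all three of its edges in E(G) \ D; in particular, the spanning subgraph with edge set E(G) \ D contains an odd cycle. -/
open Finset

theorem Finset.exists_disjoint_of_card_mul_lt {ι α : Type*} [Fintype ι] [DecidableEq α]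
    (T : ι → Finset α) {m : ℕ} (hT : ∀ a, #{i | a ∈ T i} ≤ m) (D : Finset α)
    (hD : #D * m < Fintype.card ι) : ∃ i, Disjoint (T i) D := by
  by_contra! hmeet
  have hcount : #(univ : Finset ι) * 1 ≤ #D * m := by
    refine card_mul_le_card_mul (fun i a => a ∈ T i) (fun i _ => ?_) (fun a _ => hT a)
    obtain ⟨a, haT, haD⟩ := not_disjoint_iff.1 (hmeet i)
    exact one_le_card.2 ⟨a, mem_filter.2 ⟨haD, haT⟩⟩
  rw [mul_one, card_univ] at hcount
  omega

namespace ZMod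

theorem natCast_ne_zero_of_pos_of_lt {n k : ℕ} (hk : 0 < k) (hkn : k < n) : (k : ZMod n) ≠ 0 := by
  rw [Ne, natCast_eq_zero_iff]
  exact Nat.not_dvd_of_pos_of_lt hk hkn

end ZMod

section Triangles

variable {n : ℕ}

def triangleEdges (i : ZMod n) : Finset (Sym2 (ZMod n)) :=
  {s(i - 1, i), s(i, i + 1), s(i - 1, i + 1)}

theorem eq_or_eq_or_eq_of_mem_triangleEdges (hn : 5 ≤ n) {e : Sym2 (ZMod n)} {i j : ZMod n}
    (hi : e ∈ triangleEdges i) (hj : e ∈ triangleEdges j) : j = i - 1 ∨ j = i ∨ j = i + 1 := by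
  have h2 : (2 : ZMod n) ≠ 0 :=
    mod_cast ZMod.natCast_ne_zero_of_pos_of_lt (k := 2) (by norm_num) (by omega)
  have h3 : (3 : ZMod n) ≠ 0 :=
    mod_cast ZMod.natCast_ne_zero_of_pos_of_lt (k := 3) (by norm_num) (by omega)
  have h4 : (4 : ZMod n) ≠ 0 :=
    mod_cast ZMod.natCast_ne_zero_of_pos_of_lt (k := 4) (by norm_num) (by omega)
  simp only [triangleEdges, mem_insert, mem_singleton] at hi hj
  rcases hi with rfl | rfl | rfl <;> simp only [Sym2.eq_iff] at hj <;> grind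

theorem card_filter_mem_triangleEdges_le_two [NeZero n] (hn : 5 ≤ n) (e : Sym2 (ZMod n)) :
    #{i | e ∈ triangleEdges i} ≤ 2 := by
  have h2 : (2 : ZMod n) ≠ 0 :=
    mod_cast ZMod.natCast_ne_zero_of_pos_of_lt (k := 2) (by norm_num) (by omega)
  have h3 : (3 : ZMod n) ≠ 0 :=
    mod_cast ZMod.natCast_ne_zero_of_pos_of_lt (k := 3) (by norm_num) (by omega)
  by_contra! hcard
  obtain ⟨a, ha, b, hb, c, hc, hab, hac, hbc⟩ := two_lt_card.1 hcard
  simp only [mem_filter, mem_univ, true_and] at ha hb hc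
  have := eq_or_eq_or_eq_of_mem_triangleEdges hn ha hb
  have := eq_or_eq_or_eq_of_mem_triangleEdges hn ha hc
  have := eq_or_eq_or_eq_of_mem_triangleEdges hn hb hc
  grind

theorem circulant_adj_of_sub_eq_natCast {r k : ℕ} (hk : 1 ≤ k) (hkr : k ≤ r) (hkn : k < n)
    {i j : ZMod n} (h : j - i = k) : (circulant n r).Adj i j := by
  refine (SimpleGraph.fromRel_adj _ _ _).2 ⟨fun hij => ?_, Or.inr ⟨k, hk, hkr, h⟩⟩
  rw [hij, sub_self] at h
  exact ZMod.natCast_ne_zero_of_pos_of_lt hk hkn h.symm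

end Triangles

theorem circulant_triangle_survives_general (n r : ℕ) (hn : 5 ≤ n) (hr : 2 ≤ r) :
    (∀ i : ZMod n,
      (circulant n r).Adj (i - 1) i ∧ (circulant n r).Adj i (i + 1) ∧
        (circulant n r).Adj (i - 1) (i + 1)) ∧
    ∀ D : Finset (Sym2 (ZMod n)), ↑D ⊆ (circulant n r).edgeSet →
      D.card ≤ (n + 1) / 2 - 1 →
      (∃ i : ZMod n, s(i - 1, i) ∉ D ∧ s(i, i + 1) ∉ D ∧ s(i - 1, i + 1) ∉ D) ∧
        ¬ ((circulant n r).deleteEdges ↑D).Colorable 2 := by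
  have : NeZero n := ⟨by omega⟩
  have hadj (i : ZMod n) : (circulant n r).Adj (i - 1) i ∧ (circulant n r).Adj i (i + 1) ∧
      (circulant n r).Adj (i - 1) (i + 1) :=
    ⟨circulant_adj_of_sub_eq_natCast (k := 1) le_rfl (by omega) (by omega) (by push_cast; ring),
      circulant_adj_of_sub_eq_natCast (k := 1) le_rfl (by omega) (by omega) (by push_cast; ring),
      circulant_adj_of_sub_eq_natCast (k := 2) (by norm_num) hr (by omega) (by push_cast; ring)⟩
  refine ⟨hadj, fun D _ hD => ?_⟩
  obtain ⟨i, hi⟩ := exists_disjoint_of_card_mul_lt triangleEdges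
    (card_filter_mem_triangleEdges_le_two hn) D (by rw [ZMod.card]; omega)
  simp only [triangleEdges, disjoint_insert_left, disjoint_singleton_left] at hi
  obtain ⟨h₁, h₂, h₃⟩ := hi
  refine ⟨⟨i, h₁, h₂, h₃⟩, fun hcol => hcol.cliqueFree (m := 3) (by norm_num) {i - 1, i, i + 1} ?_⟩
  obtain ⟨a₁, a₂, a₃⟩ := hadj i
  open SimpleGraph in
  exact is3Clique_triple_iff.2
    ⟨deleteEdges_adj.2 ⟨a₁, h₁⟩, deleteEdges_adj.2 ⟨a₃, h₃⟩, deleteEdges_adj.2 ⟨a₂, h₂⟩⟩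

/-- Let `n ≥ 5`, `r ≥ 2` and `2r < n`, and let `G = C_n(1, …, r)`.
For every `i`, the pairs `{i−1, i}`, `{i, i+1}`, `{i−1, i+1}` are edges of `G` (forming a
triangle `τ_i`), and whenever at most `⌈n/2⌉ − 1` edges are deleted from `G`, some
triangle `τ_i` survives entirely; in particular the resulting spanning subgraph contains
an odd cycle (is not 2-colorable). -/
theorem circulant_triangle_survives (n r : ℕ) (hn : 5 ≤ n) (hr : 2 ≤ r) (hrn : 2 * r < n) :
    (∀ i : ZMod n,
      (circulant n r).Adj (i - 1) i ∧ (circulant n r).Adj i (i + 1) ∧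
        (circulant n r).Adj (i - 1) (i + 1)) ∧
    ∀ D : Finset (Sym2 (ZMod n)), ↑D ⊆ (circulant n r).edgeSet →
      D.card ≤ (n + 1) / 2 - 1 →
      (∃ i : ZMod n, s(i - 1, i) ∉ D ∧ s(i, i + 1) ∉ D ∧ s(i - 1, i + 1) ∉ D) ∧
        ¬ ((circulant n r).deleteEdges ↑D).Colorable 2 :=
  circulant_triangle_survives_general n r hn hr
end
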